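/- arXiv:1412.5622 — 6 statements merged into one kernel-verified Lean document; each statement's English description precedes it below -/
import Mathlib

section
/- The proportion of permutations of order n that are indecomposable tends to 1 as n → ∞; that is, (|{σ ∈ S_n : σ is indecomposable}|)/n! → 1 as n → ∞. -/
open Filter Topology

/-- A permutation `σ` of order `n` is indecomposable if there is no `m` with
`1 ≤ m < n` such that `σ` maps the first `m` elements onto the first `m` elements. -/
def Indecomposable {n : ℕ} (σ : Equiv.Perm (Fin n)) : Prop :=
  ¬ ∃ m : ℕ, 1 ≤ m ∧ m < n ∧ ∀ i : Fin n, ((σ i : ℕ) < m ↔ (i : ℕ) < m)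

/-!
A decomposable permutation of order `n` maps some initial segment `[m]`, `1 ≤ m < n`, onto
itself, and exactly `m! (n - m)!` permutations do so for a given `m`. Hence the proportion of
decomposable permutations is at most `∑_{m=1}^{n-1} 1 / C(n, m)`. The two extreme terms are
`1 / n`, and by unimodality of binomial coefficients each of the other `n - 3` terms is at most
`1 / C(n, 2)`, so the sum is at most `4 / n`.
-/

open Nat

namespace Equiv.Perm

def preservingEquivProd {α : Type*} (p : α → Prop) [DecidablePred p] :
    {σ : Perm α // ∀ a, p (σ a) ↔ p a} ≃ Perm {a // p a} × Perm {a // ¬p a} where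
  toFun σ := (σ.1.subtypePerm σ.2, σ.1.subtypePerm fun a => not_congr (σ.2 a))
  invFun τ := ⟨τ.1.subtypeCongr τ.2, fun a => by
    by_cases h : p a
    · simpa [h] using (τ.1 ⟨a, h⟩).2
    · simpa [h] using (τ.2 ⟨a, h⟩).2⟩
  left_inv σ := by
    ext a
    by_cases h : p a <;> simp [h]
  right_inv τ := by
    ext x <;> simp [subtypeCongr.left_apply_subtype, subtypeCongr.right_apply_subtype]

theorem card_preserving {α : Type*} [Finite α] (p : α → Prop) :
    Nat.card {σ : Perm α // ∀ a, p (σ a) ↔ p a} =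
      (Nat.card {a // p a})! * (Nat.card {a // ¬p a})! := by
  classical
  rw [Nat.card_congr (preservingEquivProd p), Nat.card_prod, Nat.card_perm, Nat.card_perm]

end Equiv.Perm

theorem Fin.card_perm_preserving_lt {n m : ℕ} (hm : m ≤ n) :
    Nat.card {σ : Equiv.Perm (Fin n) // ∀ i : Fin n, ((σ i : ℕ) < m ↔ (i : ℕ) < m)} =
      m ! * (n - m)! := by
  refine (Equiv.Perm.card_preserving fun i : Fin n => (i : ℕ) < m).trans ?_
  rw [Nat.card_eq_fintype_card, Fintype.card_fin_lt_of_le hm, Nat.card_eq_fintype_card,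
    Fintype.card_subtype_compl, Fintype.card_fin_lt_of_le hm, Fintype.card_fin]

theorem Nat.choose_le_choose_of_le_half {n a b : ℕ} (hab : a ≤ b) (hb : b ≤ n / 2) :
    n.choose a ≤ n.choose b := by
  induction b, hab using Nat.le_induction with
  | base => rfl
  | succ b _ ih => exact (ih (by omega)).trans (Nat.choose_le_succ_of_lt_half_left (by omega))

theorem Nat.choose_two_le_choose {n m : ℕ} (hm : 2 ≤ m) (hmn : m + 2 ≤ n) :
    n.choose 2 ≤ n.choose m := by
  rcases le_or_gt m (n / 2) with h | h
  · exact Nat.choose_le_choose_of_le_half hm h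
  · rw [← Nat.choose_symm (by omega : m ≤ n)]
    exact Nat.choose_le_choose_of_le_half (by omega) (by omega)

theorem Nat.sum_Ico_inv_choose_le {n : ℕ} (hn : 3 ≤ n) :
    ∑ m ∈ Finset.Ico 1 n, ((n.choose m : ℝ))⁻¹ ≤ 4 / n := by
  obtain ⟨k, rfl⟩ : ∃ k, n = k + 1 := ⟨n - 1, by omega⟩
  have hk : (2 : ℝ) ≤ k := by exact_mod_cast (by omega : 2 ≤ k)
  have hmiddle : ∑ m ∈ Finset.Ico 2 k, (((k + 1).choose m : ℝ))⁻¹ ≤ 2 / (k + 1) := by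
    calc ∑ m ∈ Finset.Ico 2 k, (((k + 1).choose m : ℝ))⁻¹
        ≤ (Finset.Ico 2 k).card • (((k + 1).choose 2 : ℝ))⁻¹ := by
          refine Finset.sum_le_card_nsmul _ _ _ fun m hm => ?_
          rw [Finset.mem_Ico] at hm
          gcongr
          · exact_mod_cast Nat.choose_pos (by omega)
          · exact Nat.choose_two_le_choose hm.1 (by omega)
      _ ≤ (k : ℝ) * ((k + 1 : ℝ) * k / 2)⁻¹ := by
          rw [nsmul_eq_mul, Nat.cast_choose_two, Nat.card_Ico]
          push_cast
          rw [add_sub_cancel_right]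
          gcongr
          omega
      _ = 2 / (k + 1) := by field_simp
  rw [Finset.sum_Ico_succ_top (by omega), Finset.sum_eq_sum_Ico_succ_bot (by omega),
    Nat.choose_one_right, Nat.choose_succ_self_right]
  push_cast
  have hends : ((k : ℝ) + 1)⁻¹ + 2 / (k + 1) + ((k : ℝ) + 1)⁻¹ = 4 / (k + 1) := by
    field_simp
    ring
  linarith

open Finset in
theorem card_not_indecomposable_le (n : ℕ) :
    Nat.card {σ : Equiv.Perm (Fin n) // ¬Indecomposable σ} ≤ ∑ m ∈ Ico 1 n, m ! * (n - m)! := by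
  classical
  let preserving (m : ℕ) : Finset (Equiv.Perm (Fin n)) :=
    {σ | ∀ i : Fin n, ((σ i : ℕ) < m ↔ (i : ℕ) < m)}
  calc Nat.card {σ : Equiv.Perm (Fin n) // ¬Indecomposable σ}
      = #{σ | ¬Indecomposable σ} := by rw [Nat.card_eq_fintype_card, Fintype.card_subtype]
    _ ≤ #((Ico 1 n).biUnion preserving) := card_le_card fun σ => by
        simp [preserving, Indecomposable, and_assoc]
    _ ≤ ∑ m ∈ Ico 1 n, #(preserving m) := card_biUnion_le
    _ = ∑ m ∈ Ico 1 n, m ! * (n - m)! := sum_congr rfl fun m hm => by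
        rw [← Fintype.card_subtype, ← Nat.card_eq_fintype_card,
          Fin.card_perm_preserving_lt (mem_Ico.1 hm).2.le]

theorem card_not_indecomposable_div_factorial_le (n : ℕ) :
    (Nat.card {σ : Equiv.Perm (Fin n) // ¬Indecomposable σ} : ℝ) / n ! ≤
      ∑ m ∈ Finset.Ico 1 n, ((n.choose m : ℝ))⁻¹ := by
  rw [div_le_iff₀ (by positivity), Finset.sum_mul]
  calc (Nat.card {σ : Equiv.Perm (Fin n) // ¬Indecomposable σ} : ℝ)
      ≤ ∑ m ∈ Finset.Ico 1 n, (m ! * (n - m)! : ℝ) := by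
        exact_mod_cast card_not_indecomposable_le n
    _ = ∑ m ∈ Finset.Ico 1 n, ((n.choose m : ℝ))⁻¹ * n ! :=
        Finset.sum_congr rfl fun m hm => by
          rw [Nat.cast_choose ℝ (Finset.mem_Ico.1 hm).2.le]
          field_simp

theorem card_indecomposable_add_card_not_indecomposable (n : ℕ) :
    Nat.card {σ : Equiv.Perm (Fin n) // Indecomposable σ} +
      Nat.card {σ : Equiv.Perm (Fin n) // ¬Indecomposable σ} = n ! := by
  classical
  rw [← Nat.card_sum, Nat.card_congr (Equiv.sumCompl _), Nat.card_perm, Nat.card_fin]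

/-- The proportion of permutations of order `n` that are indecomposable tends
to `1` as `n → ∞`. -/
theorem tendsto_proportion_indecomposable :
    Tendsto (fun n : ℕ =>
        (Nat.card {σ : Equiv.Perm (Fin n) // Indecomposable σ} : ℝ) / (n.factorial : ℝ))
      atTop (𝓝 1) := by
  have hproportion (n : ℕ) :
      (Nat.card {σ : Equiv.Perm (Fin n) // Indecomposable σ} : ℝ) / n ! =
        1 - (Nat.card {σ : Equiv.Perm (Fin n) // ¬Indecomposable σ} : ℝ) / n ! := by
    rw [eq_sub_iff_add_eq, ← add_div, div_eq_one_iff_eq (by positivity)]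
    exact_mod_cast card_indecomposable_add_card_not_indecomposable n
  have hdecomposable : Tendsto (fun n : ℕ =>
      (Nat.card {σ : Equiv.Perm (Fin n) // ¬Indecomposable σ} : ℝ) / n !) atTop (𝓝 0) :=
    squeeze_zero' (Eventually.of_forall fun n => by positivity)
      ((eventually_ge_atTop 3).mono fun n hn =>
        (card_not_indecomposable_div_factorial_le n).trans (Nat.sum_Ico_inv_choose_le hn))
      (tendsto_const_div_atTop_nhds_zero_nat 4)
  simpa [hproportion] using hdecomposable.const_sub 1
end

section
/- For every integer q ≥ 2, the sets T^q_mon and T^q_hom are equal. -/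
open Filter Topology

/-- The type of finite permutations of all orders: a permutation of order `n`
is a bijection of `Fin n` (representing `[n] = {1,…,n}`). -/
abbrev Perms : Type := Σ n : ℕ, Equiv.Perm (Fin n)

/-- Indecomposability for a permutation of arbitrary order. -/
def Perms.Indec (σ : Perms) : Prop := Indecomposable σ.2

/-- `f` is an occurrence of `π` in `σ`: a strictly increasing map preserving
the relative order of values. -/
def IsOcc {k n : ℕ} (π : Equiv.Perm (Fin k)) (σ : Equiv.Perm (Fin n))
    (f : Fin k → Fin n) : Prop :=
  StrictMono f ∧ ∀ i j : Fin k, π i < π j ↔ σ (f i) < σ (f j)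

/-- `Λ(π,σ)`: the number of occurrences of `π` in `σ`. -/
noncomputable def lam {k n : ℕ} (π : Equiv.Perm (Fin k)) (σ : Equiv.Perm (Fin n)) : ℕ :=
  Nat.card {f : Fin k → Fin n // IsOcc π σ f}

/-- The (sub)permutation density `t(π,σ)`. -/
noncomputable def dens {k n : ℕ} (π : Equiv.Perm (Fin k)) (σ : Equiv.Perm (Fin n)) : ℝ :=
  if k ≤ n then (lam π σ : ℝ) / (n.choose k : ℝ) else 0

/-- The density `t(π,σ)` for permutations of arbitrary orders. -/
noncomputable def subDens (π σ : Perms) : ℝ := dens π.2 σ.2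

/-- `f` is a homomorphism from `π` to `σ`: a non-decreasing map preserving inversions. -/
def IsHom {k n : ℕ} (π : Equiv.Perm (Fin k)) (σ : Equiv.Perm (Fin n))
    (f : Fin k → Fin n) : Prop :=
  Monotone f ∧ ∀ i j : Fin k, i < j → π j < π i → σ (f j) < σ (f i)

/-- `f` is a monomorphism from `π` to `σ`: an injective homomorphism. -/
def IsMon {k n : ℕ} (π : Equiv.Perm (Fin k)) (σ : Equiv.Perm (Fin n))
    (f : Fin k → Fin n) : Prop :=
  IsHom π σ f ∧ Function.Injective f

/-- `Λ_hom(π,σ)`: the number of homomorphisms from `π` to `σ`. -/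
noncomputable def lamHom {k n : ℕ} (π : Equiv.Perm (Fin k)) (σ : Equiv.Perm (Fin n)) : ℕ :=
  Nat.card {f : Fin k → Fin n // IsHom π σ f}

/-- `Λ_mon(π,σ)`: the number of monomorphisms from `π` to `σ`. -/
noncomputable def lamMon {k n : ℕ} (π : Equiv.Perm (Fin k)) (σ : Equiv.Perm (Fin n)) : ℕ :=
  Nat.card {f : Fin k → Fin n // IsMon π σ f}

/-- The monomorphism density `t_mon(π,σ)`. -/
noncomputable def densMon {k n : ℕ} (π : Equiv.Perm (Fin k)) (σ : Equiv.Perm (Fin n)) : ℝ :=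
  if k ≤ n then (lamMon π σ : ℝ) / (n.choose k : ℝ) else 0

/-- The homomorphism density `t_hom(π,σ)`. -/
noncomputable def densHom {k n : ℕ} (π : Equiv.Perm (Fin k)) (σ : Equiv.Perm (Fin n)) : ℝ :=
  (lamHom π σ : ℝ) / (((n + k - 1).choose k : ℕ) : ℝ)

/-- Monomorphism density for permutations of arbitrary orders. -/
noncomputable def monDens (π σ : Perms) : ℝ := densMon π.2 σ.2

/-- Homomorphism density for permutations of arbitrary orders. -/
noncomputable def homDens (π σ : Perms) : ℝ := densHom π.2 σ.2

/-- The set of limit points in `ℝ^r` of the density vectors (with respect to a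
density notion `d`) of the permutations `τ 0, …, τ (r-1)`, along sequences of
permutations whose orders tend to infinity. -/
def TsetOf {r : ℕ} (d : Perms → Perms → ℝ) (τ : Fin r → Perms) :
    Set (EuclideanSpace ℝ (Fin r)) :=
  {v | ∃ σs : ℕ → Perms,
        Tendsto (fun n => (σs n).1) atTop atTop ∧
        Tendsto (fun n => (WithLp.toLp 2 (fun i => d (τ i) (σs n)) : EuclideanSpace ℝ (Fin r)))
          atTop (𝓝 v)}

/-- `τ : Fin r → Perms` enumerates (without repetition) all non-trivial
indecomposable permutations of order at most `q`. -/
def EnumOf (q r : ℕ) (τ : Fin r → Perms) : Prop :=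
  Function.Injective τ ∧
    ∀ p : Perms, p ∈ Set.range τ ↔ (2 ≤ p.1 ∧ p.1 ≤ q ∧ Perms.Indec p)

/-- `T^q_mon`: limit points of vectors of monomorphism densities. -/
def TqMon {r : ℕ} (τ : Fin r → Perms) : Set (EuclideanSpace ℝ (Fin r)) :=
  TsetOf monDens τ

/-- `T^q_hom`: limit points of vectors of homomorphism densities. -/
def TqHom {r : ℕ} (τ : Fin r → Perms) : Set (EuclideanSpace ℝ (Fin r)) :=
  TsetOf homDens τ

/-! A monomorphism is a strictly increasing homomorphism, so `Λ_hom(π,σ) - Λ_mon(π,σ)` counts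
non-injective homomorphisms and is at most the number of non-injective non-decreasing maps
`[k] → [n]`, which is `C(n+k-1,k) - C(n,k)` (stars and bars). As both binomials are
`~ n^k / k!`, `t_hom(π,σ) - t_mon(π,σ) → 0` as `|σ| → ∞` for every fixed `π`, so the two density
vectors have the same limit points. -/

open Finset

theorem Finset.card_add_card_filter_le {α : Type*} {s t : Finset α} (hst : s ⊆ t) (p : α → Prop)
    [DecidablePred p] : #s + #(t.filter p) ≤ #(s.filter p) + #t := by
  have hs := card_filter_add_card_filter_not (s := s) p
  have ht := card_filter_add_card_filter_not (s := t) p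
  have := card_le_card (filter_subset_filter (fun a => ¬ p a) hst)
  omega

namespace Fin

variable {k m : ℕ} {g : Fin k → Fin m}

theorem val_le_of_strictMono (hg : StrictMono g) (i : Fin k) : (i : ℕ) ≤ g i := by
  simpa using card_le_card_of_injOn g (s := Iio i) (t := Iio (g i))
    (fun j hj => by simpa using hg (by simpa using hj)) hg.injective.injOn

theorem val_add_le_of_strictMono (hg : StrictMono g) (i : Fin k) : (g i : ℕ) + k ≤ m + i := by
  have := card_le_card_of_injOn g (s := Ioi i) (t := Ioi (g i))
    (fun j hj => by simpa using hg (by simpa using hj)) hg.injective.injOn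
  simp only [card_Ioi] at this
  omega

theorem monotone_val_sub_of_strictMono (hg : StrictMono g) : Monotone fun i => (g i : ℕ) - i := by
  intro i j hij
  have hcard := card_le_card_of_injOn g (s := Ico i j) (t := Ico (g i) (g j))
    (fun l hl => by simp only [coe_Ico, Set.mem_Ico] at hl ⊢; exact ⟨hg.monotone hl.1, hg hl.2⟩)
    hg.injective.injOn
  have := val_le_of_strictMono hg i
  have := val_le_of_strictMono hg j
  have := hg.monotone hij
  simp only [card_Ico, le_def] at hcard hij this
  show (g i : ℕ) - i ≤ g j - j
  omega

theorem card_strictMono (k n : ℕ) :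
    Nat.card {f : Fin k → Fin n // StrictMono f} = n.choose k := by
  let e : {f : Fin k → Fin n // StrictMono f} ≃ {s : Finset (Fin n) // #s = k} :=
    { toFun f := ⟨univ.image f.1, by simp [card_image_of_injective _ f.2.injective]⟩
      invFun s := ⟨s.1.orderEmbOfFin s.2, (s.1.orderEmbOfFin s.2).strictMono⟩
      left_inv f := Subtype.ext (orderEmbOfFin_unique _ (by simp) f.2).symm
      right_inv s := Subtype.ext (image_orderEmbOfFin_univ s.1 s.2) }
  rw [Nat.card_congr e, Nat.card_eq_fintype_card, Fintype.card_finset_len, Fintype.card_fin]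

def monotoneEquivStrictMono (k n : ℕ) :
    {f : Fin k → Fin n // Monotone f} ≃ {g : Fin k → Fin (n + k - 1) // StrictMono g} where
  toFun f := ⟨fun i => ⟨f.1 i + i, by omega⟩, fun i j hij => by
    have := f.2 hij.le
    simp only [lt_def, le_def] at hij this ⊢
    omega⟩
  invFun g := ⟨fun i => ⟨g.1 i - i, by
    have := val_le_of_strictMono g.2 i
    have := val_add_le_of_strictMono g.2 i
    omega⟩, fun _ _ hij => monotone_val_sub_of_strictMono g.2 hij⟩
  left_inv f := by ext; simp
  right_inv g := by ext i; simp [Nat.sub_add_cancel (val_le_of_strictMono g.2 i)]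

theorem card_monotone (k n : ℕ) :
    Nat.card {f : Fin k → Fin n // Monotone f} = (n + k - 1).choose k := by
  rw [Nat.card_congr (monotoneEquivStrictMono k n), card_strictMono]

end Fin

section Densities

variable {k n : ℕ} (π : Equiv.Perm (Fin k)) (σ : Equiv.Perm (Fin n))

theorem lamMon_le_lamHom : lamMon π σ ≤ lamHom π σ :=
  Nat.card_mono (Set.toFinite _) fun _ hf => hf.1

theorem lamMon_le_choose : lamMon π σ ≤ n.choose k := by
  rw [lamMon, ← Fin.card_strictMono]
  exact Nat.card_mono (Set.toFinite _) fun f hf => hf.1.1.strictMono_of_injective hf.2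

theorem lamHom_add_choose_le : lamHom π σ + n.choose k ≤ lamMon π σ + (n + k - 1).choose k := by
  classical
  have hHom : lamHom π σ = #{f | IsHom π σ f} := Nat.subtype_card _ (by simp)
  have hMon : lamMon π σ = #{f ∈ {f | IsHom π σ f} | Function.Injective f} :=
    Nat.subtype_card _ (by simp [IsMon])
  have hMonotone : (n + k - 1).choose k = #{f : Fin k → Fin n | Monotone f} :=
    (Fin.card_monotone k n).symm.trans (Nat.subtype_card _ (by simp))
  have hStrictMono : n.choose k = #{f ∈ {f : Fin k → Fin n | Monotone f} | Function.Injective f} :=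
    (Fin.card_strictMono k n).symm.trans (Nat.subtype_card _ fun f => by
      simpa using ⟨fun h => h.1.strictMono_iff_injective.2 h.2, fun h => ⟨h.monotone, h.injective⟩⟩)
  rw [hHom, hMon, hMonotone, hStrictMono]
  exact card_add_card_filter_le (fun f hf => by simpa using (mem_filter.1 hf).2.1) _

end Densities

open Asymptotics

theorem abs_div_sub_div_le_one_sub_div {A B M N : ℝ} (hA : 0 ≤ A) (hAM : A ≤ M) (hAB : A ≤ B)
    (hBN : B + M ≤ A + N) (hM : 0 < M) : |B / N - A / M| ≤ 1 - M / N := by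
  have hN : 0 < N := by linarith
  rw [abs_sub_le_iff, sub_le_iff_le_add, sub_le_iff_le_add]
  constructor
  · calc B / N ≤ (A + N - M) / N := by gcongr; linarith
      _ = 1 - M / N + A / N := by field_simp; ring
      _ ≤ 1 - M / N + A / M := by gcongr; linarith
  · calc A / M = 1 - M / N + A / N - (1 - A / M) * (1 - M / N) := by field_simp; ring
      _ ≤ 1 - M / N + B / N := by
        have : 0 ≤ (1 - A / M) * (1 - M / N) := mul_nonneg
          (by rw [sub_nonneg, div_le_one hM]; exact hAM)
          (by rw [sub_nonneg, div_le_one hN]; linarith)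
        have : A / N ≤ B / N := by gcongr
        linarith

theorem tendsto_choose_div_choose_add_sub_one (k : ℕ) :
    Tendsto (fun n : ℕ => (n.choose k : ℝ) / (n + k - 1).choose k) atTop (𝓝 1) := by
  have hshift : (fun n : ℕ => ((n + k - 1).choose k : ℝ)) =
      (fun n : ℕ => (n.choose k : ℝ)) ∘ (· + (k - 1)) := by
    funext n; rcases k with _ | k <;> simp
  have hlin : (fun n : ℕ => ((n + (k - 1) : ℕ) : ℝ)) ~[atTop] fun n => (n : ℝ) := by
    push_cast
    exact IsEquivalent.refl.add_isLittleO
      ((isLittleO_const_id_atTop _).comp_tendsto tendsto_natCast_atTop_atTop)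
  have hN : (fun n : ℕ => ((n + k - 1).choose k : ℝ)) ~[atTop]
      fun n => (n ^ k / k.factorial : ℝ) := by
    rw [hshift]
    exact ((isEquivalent_choose k).comp_tendsto (tendsto_add_atTop_nat _)).trans
      ((hlin.pow k).div IsEquivalent.refl)
  refine (isEquivalent_iff_tendsto_one ?_).1 ((isEquivalent_choose k).trans hN.symm)
  filter_upwards [eventually_ge_atTop 1] with n hn
  exact_mod_cast (Nat.choose_pos (by omega)).ne'

theorem abs_densHom_sub_densMon_le {k n : ℕ} (π : Equiv.Perm (Fin k)) (σ : Equiv.Perm (Fin n))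
    (hkn : k ≤ n) : |densHom π σ - densMon π σ| ≤ 1 - n.choose k / (n + k - 1).choose k := by
  rw [densHom, densMon, if_pos hkn]
  exact abs_div_sub_div_le_one_sub_div (Nat.cast_nonneg _) (mod_cast lamMon_le_choose π σ)
    (mod_cast lamMon_le_lamHom π σ) (mod_cast lamHom_add_choose_le π σ)
    (mod_cast Nat.choose_pos hkn)

theorem tendsto_homDens_sub_monDens {ι : Type*} {l : Filter ι} (π : Perms) {σs : ι → Perms}
    (hσs : Tendsto (fun i => (σs i).1) l atTop) :
    Tendsto (fun i => homDens π (σs i) - monDens π (σs i)) l (𝓝 0) := by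
  have hbound : Tendsto (fun n : ℕ => 1 - (n.choose π.1 : ℝ) / (n + π.1 - 1).choose π.1) atTop
      (𝓝 0) := by
    simpa using (tendsto_choose_div_choose_add_sub_one π.1).const_sub 1
  refine squeeze_zero_norm' ?_ (hbound.comp hσs)
  filter_upwards [hσs.eventually_ge_atTop π.1] with i hi
  exact abs_densHom_sub_densMon_le π.2 (σs i).2 hi

theorem TsetOf_subset_of_tendsto_sub {r : ℕ} {d₁ d₂ : Perms → Perms → ℝ} {τ : Fin r → Perms}
    (hd : ∀ (i : Fin r) (σs : ℕ → Perms), Tendsto (fun n => (σs n).1) atTop atTop →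
      Tendsto (fun n => d₁ (τ i) (σs n) - d₂ (τ i) (σs n)) atTop (𝓝 0)) :
    TsetOf d₁ τ ⊆ TsetOf d₂ τ := by
  rintro v ⟨σs, hσs, hv⟩
  refine ⟨σs, hσs, ?_⟩
  have hdiff : Tendsto (fun n => WithLp.toLp 2 fun i => d₁ (τ i) (σs n) - d₂ (τ i) (σs n))
      atTop (𝓝 (WithLp.toLp 2 0 : EuclideanSpace ℝ (Fin r))) :=
    ((PiLp.continuous_toLp 2 _).tendsto 0).comp (tendsto_pi_nhds.2 fun i => hd i σs hσs)
  simpa [← WithLp.toLp_sub, Pi.sub_def] using hv.sub hdiff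

theorem TqMon_eq_TqHom_general (r : ℕ) (τ : Fin r → Perms) :
    TqMon τ = TqHom τ := by
  refine Set.Subset.antisymm (TsetOf_subset_of_tendsto_sub fun i _ h => ?_)
    (TsetOf_subset_of_tendsto_sub fun i _ h => tendsto_homDens_sub_monDens (τ i) h)
  simpa using (tendsto_homDens_sub_monDens (τ i) h).neg

/-- **Observation 1.** For every integer `q ≥ 2`, the sets `T^q_mon` and
`T^q_hom` are equal. -/
theorem TqMon_eq_TqHom (q : ℕ) (hq : 2 ≤ q) (r : ℕ) (τ : Fin r → Perms)
    (henum : EnumOf q r τ) :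
    TqMon τ = TqHom τ :=
  TqMon_eq_TqHom_general r τ
end

section
/- For every integer q ≥ 2, there exists an invertible (non-singular) linear map L : ℝ^r → ℝ^r such that T^q_mon is the image of T^q under L. -/
open Filter Topology

/-- `T^q`: limit points of vectors of subpermutation densities. -/
def Tq {r : ℕ} (τ : Fin r → Perms) : Set (EuclideanSpace ℝ (Fin r)) :=
  TsetOf subDens τ

/-!
A monomorphism `f` from `π` into `σ` is an occurrence in `σ` of the pattern `π'` that `σ`
induces on the image of `f`, and the homomorphism condition says exactly that every inversion
of `π` is an inversion of `π'`. Hence `t_mon(π, σ) = ∑ t(π', σ)` over the permutations `π'`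
of the same order whose inversion set contains that of `π`. Such a `π'` is indecomposable
when `π` is, so it is again one of the `τ j`: the vector `t^q_mon(σ)` is a fixed `0/1` matrix
times `t^q(σ)`. Ordered by number of inversions this matrix is unitriangular, hence
invertible, and a linear homeomorphism maps limit points onto limit points.
-/

open Finset

section Patterns

variable {k : ℕ}

theorem Equiv.Perm.eq_of_lt_iff_lt {π π' : Equiv.Perm (Fin k)}
    (h : ∀ i j, π i < π j ↔ π' i < π' j) : π = π' := by
  let e : Fin k ≃o Fin k :=
    ⟨π.symm.trans π', fun {a b} => by simpa [not_lt] using (h (π.symm b) (π.symm a)).not.symm⟩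
  have he : e = OrderIso.refl _ := Subsingleton.elim _ _
  ext i
  simpa [e] using (congrArg (fun g : Fin k ≃o Fin k => (g (π i) : ℕ)) he).symm

theorem exists_perm_lt_iff_lt {α : Type*} [LinearOrder α] (g : Fin k → α)
    (hg : Function.Injective g) : ∃ p : Equiv.Perm (Fin k), ∀ i j, p i < p j ↔ g i < g j := by
  have hsorted : StrictMono (g ∘ Tuple.sort g) :=
    (Tuple.monotone_sort g).strictMono_of_injective (hg.comp (Tuple.sort g).injective)
  refine ⟨(Tuple.sort g)⁻¹, fun i j => ?_⟩
  simpa using (hsorted.lt_iff_lt (a := (Tuple.sort g)⁻¹ i) (b := (Tuple.sort g)⁻¹ j)).symm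

theorem Equiv.Perm.card_filter_lt (π : Equiv.Perm (Fin k)) (x : Fin k) :
    #{j | π j < x} = x := by
  rw [← Fin.card_Iio x]
  exact card_equiv π (by simp)

def inversions (π : Equiv.Perm (Fin k)) : Finset (Fin k × Fin k) :=
  {p | p.1 < p.2 ∧ π p.2 < π p.1}

@[simp]
theorem mem_inversions {π : Equiv.Perm (Fin k)} {i j : Fin k} :
    (i, j) ∈ inversions π ↔ i < j ∧ π j < π i := by
  simp [inversions]

theorem inversions_subset_iff {π π' : Equiv.Perm (Fin k)} :
    inversions π ⊆ inversions π' ↔ ∀ i j, i < j → π j < π i → π' j < π' i := by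
  refine ⟨fun h i j hij hπ => (mem_inversions.1 (h (mem_inversions.2 ⟨hij, hπ⟩))).2, ?_⟩
  rintro h ⟨i, j⟩ hij
  rw [mem_inversions] at hij ⊢
  exact ⟨hij.1, h i j hij.1 hij.2⟩

theorem inversions_injective : Function.Injective (inversions (k := k)) := by
  intro π π' h
  have hinv : ∀ i j, i < j → (π j < π i ↔ π' j < π' i) := fun i j hij => by
    simpa [hij] using Finset.ext_iff.1 h (i, j)
  refine Equiv.Perm.eq_of_lt_iff_lt fun i j => ?_
  rcases lt_trichotomy i j with hij | rfl | hij
  · have hne : π i ≠ π j := π.injective.ne hij.ne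
    have hne' : π' i ≠ π' j := π'.injective.ne hij.ne
    rw [← not_iff_not, not_lt, not_lt, hne.symm.le_iff_lt, hne'.symm.le_iff_lt]
    exact hinv i j hij
  · simp
  · exact hinv j i hij

end Patterns

section Densities

variable {k n : ℕ}

theorem IsOcc.perm_unique {π π' : Equiv.Perm (Fin k)} {σ : Equiv.Perm (Fin n)}
    {f : Fin k → Fin n} (h : IsOcc π σ f) (h' : IsOcc π' σ f) : π = π' :=
  Equiv.Perm.eq_of_lt_iff_lt fun i j => (h.2 i j).trans (h'.2 i j).symm

theorem isMon_iff_exists_isOcc (π : Equiv.Perm (Fin k)) (σ : Equiv.Perm (Fin n))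
    (f : Fin k → Fin n) :
    IsMon π σ f ↔ ∃ π', IsOcc π' σ f ∧ inversions π ⊆ inversions π' := by
  simp only [inversions_subset_iff]
  constructor
  · rintro ⟨⟨hmono, hinv⟩, hinj⟩
    obtain ⟨π', hπ'⟩ := exists_perm_lt_iff_lt (σ ∘ f) (σ.injective.comp hinj)
    exact ⟨π', ⟨hmono.strictMono_of_injective hinj, hπ'⟩,
      fun i j hij hπ => (hπ' j i).2 (hinv i j hij hπ)⟩
  · rintro ⟨π', ⟨hf, hπ'⟩, hsub⟩
    exact ⟨⟨hf.monotone, fun i j hij hπ => (hπ' j i).1 (hsub i j hij hπ)⟩, hf.injective⟩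

theorem lamMon_eq_sum_lam (π : Equiv.Perm (Fin k)) (σ : Equiv.Perm (Fin n)) :
    lamMon π σ = ∑ π' with inversions π ⊆ inversions π', lam π' σ := by
  classical
  have hcard (P : (Fin k → Fin n) → Prop) : Nat.card {f // P f} = #{f | P f} := by
    rw [Nat.card_eq_fintype_card, Fintype.card_subtype]
  have hfibres : ({f | IsMon π σ f} : Finset (Fin k → Fin n)) =
      ({π' | inversions π ⊆ inversions π'} : Finset _).biUnion fun π' => {f | IsOcc π' σ f} := by
    ext f
    simp [isMon_iff_exists_isOcc, and_comm]
  rw [lamMon, hcard, hfibres, card_biUnion]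
  · simp only [lam, hcard]
  · intro π₁ _ π₂ _ hne
    exact disjoint_filter.2 fun f _ h₁ h₂ => hne (h₁.perm_unique h₂)

theorem densMon_eq_sum_dens (π : Equiv.Perm (Fin k)) (σ : Equiv.Perm (Fin n)) :
    densMon π σ = ∑ π' with inversions π ⊆ inversions π', dens π' σ := by
  by_cases hkn : k ≤ n
  · simp only [densMon, _root_.dens, if_pos hkn, lamMon_eq_sum_lam, Nat.cast_sum, sum_div]
  · simp [densMon, _root_.dens, hkn]

theorem Equiv.Perm.val_lt_iff_of_lt_of_le {π : Equiv.Perm (Fin k)} {m : ℕ}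
    (h : ∀ a b : Fin k, (a : ℕ) < m → m ≤ b → π a < π b) (i : Fin k) :
    (π i : ℕ) < m ↔ (i : ℕ) < m := by
  have hrank := π.card_filter_lt (π i)
  by_cases hi : (i : ℕ) < m
  · have hlt : #{j | π j < π i} < #{j : Fin k | (j : ℕ) < m} := by
      refine card_lt_card ⟨fun j hj => ?_, fun hsub => ?_⟩
      · simp only [mem_filter, mem_univ, true_and] at hj ⊢
        by_contra hjm
        exact lt_asymm hj (h i j hi (not_lt.1 hjm))
      · simpa using hsub (by simpa using hi : i ∈ _)
    rw [Fin.card_filter_val_lt] at hlt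
    omega
  · have hle : #{j : Fin k | (j : ℕ) < m} ≤ #{j | π j < π i} := by
      refine card_le_card fun j hj => ?_
      simp only [mem_filter, mem_univ, true_and] at hj ⊢
      exact h j i hj (not_lt.1 hi)
    rw [Fin.card_filter_val_lt] at hle
    omega

theorem Indecomposable.of_inversions_subset {π π' : Equiv.Perm (Fin k)}
    (hπ : Indecomposable π) (hsub : inversions π ⊆ inversions π') : Indecomposable π' := by
  rintro ⟨m, hm1, hmk, hsplit⟩
  -- A split of `π'` at `m` leaves no inversion of `π'` across `m`, hence none of `π`.
  refine hπ ⟨m, hm1, hmk, π.val_lt_iff_of_lt_of_le fun a b ha hb => ?_⟩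
  have hab : a < b := Fin.lt_def.2 (by omega)
  have hπ'ab : π' a < π' b := Fin.lt_def.2 (by have := hsplit a; have := hsplit b; omega)
  refine (π.injective.ne hab.ne).lt_of_le (not_lt.1 fun hba => ?_)
  exact lt_asymm hπ'ab (inversions_subset_iff.1 hsub a b hab hba)

end Densities

namespace Perms

def above (p : Perms) : Finset Perms :=
  ({π' | inversions p.2 ⊆ inversions π'} : Finset _).map (Function.Embedding.sigmaMk p.1)

theorem mem_above {k : ℕ} {π : Equiv.Perm (Fin k)} {p' : Perms} :
    p' ∈ above ⟨k, π⟩ ↔ ∃ π', inversions π ⊆ inversions π' ∧ ⟨k, π'⟩ = p' := by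
  simp [above]

theorem self_mem_above (p : Perms) : p ∈ p.above :=
  mem_above.2 ⟨p.2, subset_rfl, rfl⟩

theorem card_inversions_lt_of_mem_above {p p' : Perms} (h : p' ∈ p.above) (hne : p ≠ p') :
    #(inversions p.2) < #(inversions p'.2) := by
  obtain ⟨k, π⟩ := p
  obtain ⟨π', hsub, rfl⟩ := mem_above.1 h
  refine card_lt_card (Finset.ssubset_iff_subset_ne.2 ⟨hsub, fun heq => hne ?_⟩)
  exact congrArg _ (inversions_injective heq)

theorem mem_range_of_mem_above {q r : ℕ} {τ : Fin r → Perms} (henum : EnumOf q r τ) (i : Fin r)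
    {p' : Perms} (h : p' ∈ (τ i).above) : p' ∈ Set.range τ := by
  obtain ⟨h2, hq, hind⟩ := (henum.2 (τ i)).1 ⟨i, rfl⟩
  obtain ⟨k, π⟩ := τ i
  obtain ⟨π', hsub, rfl⟩ := mem_above.1 h
  exact (henum.2 _).2 ⟨h2, hq, Indecomposable.of_inversions_subset hind hsub⟩

theorem monDens_eq_sum_above (p σ : Perms) : monDens p σ = ∑ p' ∈ p.above, subDens p' σ := by
  rw [above, sum_map]
  exact densMon_eq_sum_dens p.2 σ.2

end Perms

theorem Matrix.det_eq_one_of_unitriangular {m R α : Type*} [Fintype m] [DecidableEq m]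
    [CommRing R] [LinearOrder α] (M : Matrix m m R) (b : m → α) (hdiag : ∀ i, M i i = 1)
    (hoff : ∀ i j, i ≠ j → M i j ≠ 0 → b i < b j) : M.det = 1 := by
  have hM : M.BlockTriangular b := fun i j hji => by
    by_contra hne
    rcases eq_or_ne i j with rfl | hij
    · exact lt_irrefl _ hji
    · exact lt_asymm hji (hoff i j hij hne)
  rw [hM.det]
  refine prod_eq_one fun a _ => ?_
  have hblock : M.toSquareBlock b a = 1 := by
    ext ⟨i, hi⟩ ⟨j, hj⟩
    rcases eq_or_ne i j with rfl | hij
    · simp [Matrix.toSquareBlock_def, hdiag]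
    · have hval : M i j = 0 := by
        by_contra hne
        exact (hoff i j hij hne).ne (hi.trans hj.symm)
      simp [Matrix.toSquareBlock_def, hval, hij]
  rw [hblock, Matrix.det_one]

section DensityMatrix

variable {r : ℕ} (τ : Fin r → Perms)

def aboveMatrix : Matrix (Fin r) (Fin r) ℝ :=
  Matrix.of fun i j => if τ j ∈ (τ i).above then 1 else 0

variable {τ}

theorem det_aboveMatrix (hτ : Function.Injective τ) : (aboveMatrix τ).det = 1 := by
  refine Matrix.det_eq_one_of_unitriangular _ (fun i => #(inversions (τ i).2))
    (fun i => by simp [aboveMatrix, Perms.self_mem_above]) fun i j hij hM => ?_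
  have hmem : τ j ∈ (τ i).above := by by_contra h; simp [aboveMatrix, h] at hM
  exact Perms.card_inversions_lt_of_mem_above hmem (hτ.ne hij)

theorem monDens_eq_aboveMatrix_mulVec {q : ℕ} (henum : EnumOf q r τ) (σ : Perms) :
    (fun i => monDens (τ i) σ) = (aboveMatrix τ).mulVec fun j => subDens (τ j) σ := by
  classical
  funext i
  have himage : ({j | τ j ∈ (τ i).above} : Finset (Fin r)).image τ = (τ i).above := by
    ext p
    simp only [mem_image, mem_filter, mem_univ, true_and]
    constructor
    · rintro ⟨j, hj, rfl⟩
      exact hj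
    · intro hp
      obtain ⟨j, rfl⟩ := Perms.mem_range_of_mem_above henum i hp
      exact ⟨j, hp, rfl⟩
  rw [Perms.monDens_eq_sum_above, ← himage, sum_image fun _ _ _ _ h => henum.1 h, sum_filter]
  simp [Matrix.mulVec, dotProduct, aboveMatrix]

end DensityMatrix

theorem image_TsetOf_eq_of_homeomorph {r s : ℕ} {d d' : Perms → Perms → ℝ}
    {τ : Fin r → Perms} {τ' : Fin s → Perms}
    (e : EuclideanSpace ℝ (Fin r) ≃ₜ EuclideanSpace ℝ (Fin s))
    (he : ∀ σ, WithLp.toLp 2 (fun i => d' (τ' i) σ) = e (WithLp.toLp 2 fun i => d (τ i) σ)) :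
    e '' TsetOf d τ = TsetOf d' τ' := by
  ext u
  constructor
  · rintro ⟨v, ⟨σs, hord, hconv⟩, rfl⟩
    refine ⟨σs, hord, ?_⟩
    simpa only [he, Function.comp_def] using (e.continuous.tendsto v).comp hconv
  · rintro ⟨σs, hord, hconv⟩
    refine ⟨e.symm u, ⟨σs, hord, ?_⟩, e.apply_symm_apply u⟩
    simpa only [he, Function.comp_def, e.symm_apply_apply] using
      (e.symm.continuous.tendsto u).comp hconv

theorem TqMon_linear_image_of_Tq_general (q : ℕ) (r : ℕ) (τ : Fin r → Perms)
    (henum : EnumOf q r τ) :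
    ∃ L : EuclideanSpace ℝ (Fin r) ≃ₗ[ℝ] EuclideanSpace ℝ (Fin r),
      (fun v => L v) '' Tq τ = TqMon τ := by
  have hdet : LinearMap.det (Matrix.toLpLin 2 2 (aboveMatrix τ)) ≠ 0 := by
    rw [Matrix.toLpLin_eq_toLin, LinearMap.det_toLin, det_aboveMatrix henum.1]
    exact one_ne_zero
  let L := LinearMap.equivOfDetNeZero _ hdet
  refine ⟨L, image_TsetOf_eq_of_homeomorph L.toContinuousLinearEquiv.toHomeomorph fun σ => ?_⟩
  rw [monDens_eq_aboveMatrix_mulVec henum σ]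
  rfl

/-- **Observation 3.** For every integer `q ≥ 2`, the set `T^q_mon` is the image
of `T^q` under a non-singular (invertible) linear map `L : ℝ^r → ℝ^r`. -/
theorem TqMon_linear_image_of_Tq (q : ℕ) (hq : 2 ≤ q) (r : ℕ) (τ : Fin r → Perms)
    (henum : EnumOf q r τ) :
    ∃ L : EuclideanSpace ℝ (Fin r) ≃ₗ[ℝ] EuclideanSpace ℝ (Fin r),
      (fun v => L v) '' Tq τ = TqMon τ :=
  TqMon_linear_image_of_Tq_general q r τ henum
end

section
/- A bounded permutation parameter f is testable if and only if it is finitely approximable. -/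
open Filter Topology

/-- A permutation parameter `f : 𝔖 → ℝ` is finitely forcible if there is a finite
family `A` of permutations such that for every `ε > 0` there are `n₀` and `δ > 0`
such that any two permutations of order at least `n₀` whose densities of members
of `A` differ by less than `δ` have `f`-values within `ε`. -/
def FinitelyForcible (f : Perms → ℝ) : Prop :=
  ∃ A : Finset Perms, ∀ ε : ℝ, 0 < ε → ∃ n₀ : ℕ, ∃ δ : ℝ, 0 < δ ∧
    ∀ σ π : Perms, n₀ ≤ σ.1 → n₀ ≤ π.1 →
      (∀ τ ∈ A, |subDens τ σ - subDens τ π| < δ) → |f σ - f π| < ε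

/-- A permutation parameter `f : 𝔖 → ℝ` is finitely approximable if for every
`ε > 0` there are `δ > 0`, `n₀` and a finite family `A` of permutations such that
any two permutations of order at least `n₀` whose densities of members of `A`
differ by less than `δ` have `f`-values within `ε`. -/
def FinitelyApproximable (f : Perms → ℝ) : Prop :=
  ∀ ε : ℝ, 0 < ε → ∃ δ : ℝ, 0 < δ ∧ ∃ n₀ : ℕ, ∃ A : Finset Perms,
    ∀ σ π : Perms, n₀ ≤ σ.1 → n₀ ≤ π.1 →
      (∀ τ ∈ A, |subDens τ σ - subDens τ π| < δ) → |f σ - f π| < ε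

open scoped Classical

/-- A permutation parameter `f` is testable if for every `ε > 0` there are `n₀`
and an estimator `f̃ : S_{n₀} → ℝ` such that for every permutation `σ` of order at
least `n₀`, a uniformly random `n₀`-point subpermutation `π` of `σ` satisfies
`|f(σ) − f̃(π)| < ε` with probability at least `1 − ε`.  (The probability that the
random subpermutation equals `π` is exactly the density `t(π,σ)`.) -/
def Testable (f : Perms → ℝ) : Prop :=
  ∀ ε : ℝ, 0 < ε → ∃ n₀ : ℕ, ∃ ft : Equiv.Perm (Fin n₀) → ℝ,
    ∀ σ : Perms, n₀ ≤ σ.1 →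
      1 - ε ≤ ∑ π : Equiv.Perm (Fin n₀),
        (if |f σ - ft π| < ε then subDens ⟨n₀, π⟩ σ else 0)

/-! A random `m`-point subpermutation `π` of `σ` satisfies `𝔼 t(τ,π) = t(τ,σ)` and
`Var t(τ,π) ≤ k²/m` for `|τ| = k`: in the second moment, pairs of overlapping occurrences of `τ`
make up at most a `k²/m` fraction, and a pair of disjoint occurrences survives in the sample
with probability at most the square of that of a single occurrence. Hence, if `f` is finitely
approximable, `f` evaluated on a large sample is a tester, by Chebyshev's inequality and a union
bound over the finite family. Conversely, if `σ` and `ρ` have nearly equal `n₀`-point densities,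
some `n₀`-point sample is good for a tester with error `< 1/4` on both, so `f σ` and `f ρ` are
both close to the tester's estimate. -/

open Finset hiding dens
open Equiv

namespace Nat

variable {k m n : ℕ}

theorem choose_mul_choose_sub_le (hmn : m ≤ n) :
    n.choose k * (m - k).choose k ≤ m.choose k * (n - k).choose k := by
  have hfactor : ∀ i, (n - i) * (m - k - i) ≤ (m - i) * (n - k - i) := fun i => by
    rcases le_or_gt (m - k) i with hi | hi
    · simp [Nat.sub_eq_zero_of_le hi]
    · obtain ⟨a, rfl⟩ : ∃ a, n = m + a := ⟨n - m, by omega⟩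
      rw [show m + a - i = (m - i) + a by omega, show m + a - k - i = (m - k - i) + a by omega,
        show m - i = (m - k - i) + k by omega]
      nlinarith
  have h : n.descFactorial k * (m - k).descFactorial k
      ≤ m.descFactorial k * (n - k).descFactorial k := by
    simp only [Nat.descFactorial_eq_prod_range, ← prod_mul_distrib]
    exact prod_le_prod' fun i _ => hfactor i
  simp only [Nat.descFactorial_eq_factorial_mul_choose] at h
  refine Nat.le_of_mul_le_mul_left ?_ (Nat.mul_pos k.factorial_pos k.factorial_pos)
  linarith

theorem choose_sq_mul_choose_le (h2k : 2 * k ≤ m) (hmn : m ≤ n) :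
    n.choose k ^ 2 * (n - 2 * k).choose (m - 2 * k) ≤ m.choose k ^ 2 * n.choose m := by
  have hchain : n.choose m * m.choose k = n.choose k * (n - k).choose (m - k) :=
    Nat.choose_mul (by omega)
  have hchain' : (n - k).choose (m - k) * (m - k).choose k
      = (n - k).choose k * (n - 2 * k).choose (m - 2 * k) := by
    rw [Nat.choose_mul (by omega), show n - k - k = n - 2 * k by omega,
      show m - k - k = m - 2 * k by omega]
  have hpos : 0 < (m - k).choose k := Nat.choose_pos (by omega)
  refine Nat.le_of_mul_le_mul_left ?_ hpos
  calc (m - k).choose k * (n.choose k ^ 2 * (n - 2 * k).choose (m - 2 * k))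
      = n.choose k * (m - k).choose k * (n.choose k * (n - 2 * k).choose (m - 2 * k)) := by ring
    _ ≤ m.choose k * (n - k).choose k * (n.choose k * (n - 2 * k).choose (m - 2 * k)) :=
        Nat.mul_le_mul_right _ (Nat.choose_mul_choose_sub_le hmn)
    _ = m.choose k * n.choose k * ((n - k).choose (m - k) * (m - k).choose k) := by
        rw [hchain']; ring
    _ = (m - k).choose k * (m.choose k ^ 2 * n.choose m) := by
        rw [← mul_assoc, mul_assoc _ (n.choose k), ← hchain]; ring

theorem mul_mul_choose_sub_one (m k : ℕ) :
    m * (k * (m - 1).choose (k - 1)) = k ^ 2 * m.choose k := by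
  rcases Nat.eq_zero_or_pos k with rfl | hk
  · simp
  rcases Nat.eq_zero_or_pos m with rfl | hm
  · simp [Nat.choose_eq_zero_of_lt hk]
  have h := Nat.add_one_mul_choose_eq (m - 1) (k - 1)
  rw [Nat.sub_add_cancel hm, Nat.sub_add_cancel hk] at h
  rw [mul_left_comm, h]
  ring

end Nat

namespace Finset

theorem card_powersetCard_filter_superset {α : Type*} [Fintype α] [DecidableEq α] {m : ℕ}
    (Z : Finset α) (hZm : #Z ≤ m) :
    #{Y ∈ powersetCard m univ | Z ⊆ Y} = (Fintype.card α - #Z).choose (m - #Z) := by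
  rw [← card_compl, ← card_powersetCard]
  refine card_nbij' (· \ Z) (· ∪ Z) (fun Y hY => ?_) (fun W hW => ?_)
    (fun Y hY => sdiff_union_of_subset (mem_filter.mp hY).2)
    (fun W hW => union_sdiff_cancel_right ?_)
  · obtain ⟨hYm, hZY⟩ := mem_filter.mp hY
    rw [mem_coe, mem_powersetCard, card_sdiff_of_subset hZY, (mem_powersetCard_univ.mp hYm)]
    exact ⟨fun x hx => mem_compl.mpr (mem_sdiff.mp hx).2, rfl⟩
  · obtain ⟨hWZ, hWm⟩ := mem_powersetCard.mp hW
    rw [mem_coe, mem_filter, mem_powersetCard_univ,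
      card_union_of_disjoint (disjoint_left.mpr fun a ha => mem_compl.mp (hWZ ha))]
    exact ⟨by omega, subset_union_right⟩
  · exact disjoint_left.mpr fun a ha => mem_compl.mp ((mem_powersetCard.mp hW).1 ha)

theorem card_powersetCard_filter_not_disjoint_le {α : Type*} [Fintype α] [DecidableEq α] {k : ℕ}
    {Z : Finset α} (hZ : #Z = k) :
    #{Z' ∈ powersetCard k univ | ¬Disjoint Z Z'} ≤ k * (Fintype.card α - 1).choose (k - 1) := by
  have hsub : {Z' ∈ powersetCard k (univ : Finset α) | ¬Disjoint Z Z'}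
      ⊆ Z.biUnion fun x => {Z' ∈ powersetCard k univ | {x} ⊆ Z'} := fun Z' hZ' => by
    obtain ⟨hZ'k, hZZ'⟩ := mem_filter.mp hZ'
    obtain ⟨x, hxZ, hxZ'⟩ := not_disjoint_iff.mp hZZ'
    exact mem_biUnion.mpr ⟨x, hxZ, mem_filter.mpr ⟨hZ'k, singleton_subset_iff.mpr hxZ'⟩⟩
  refine (card_le_card hsub).trans <|
    (card_biUnion_le_card_mul _ _ _ fun x hx => ?_).trans_eq (by rw [hZ])
  have hk : 1 ≤ k := hZ ▸ card_pos.mpr ⟨x, hx⟩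
  rw [card_powersetCard_filter_superset _ (by simpa using hk), card_singleton]

theorem sum_card_filter_subset {α β : Type*} [Fintype β] [DecidableEq β] (S : Finset α)
    (u : α → Finset β) {s m : ℕ} (hu : ∀ a ∈ S, #(u a) = s) (hsm : s ≤ m) :
    ∑ Y ∈ powersetCard m univ, #{a ∈ S | u a ⊆ Y}
      = #S * (Fintype.card β - s).choose (m - s) := by
  simp only [card_filter]
  rw [sum_comm, card_eq_sum_ones, sum_mul, one_mul]
  refine sum_congr rfl fun a ha => ?_
  rw [← card_filter, card_powersetCard_filter_superset _ (hu a ha ▸ hsm), hu a ha]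

theorem sum_filter_exists_le {ι κ : Type*} [Fintype ι] (A : Finset κ) (P : κ → ι → Prop)
    [∀ a, DecidablePred (P a)] {p : ι → ℝ} (hp : ∀ i, 0 ≤ p i) :
    ∑ i with ∃ a ∈ A, P a i, p i ≤ ∑ a ∈ A, ∑ i with P a i, p i := by
  have hterm : ∀ a i, 0 ≤ if P a i then p i else 0 := fun a i => ite_nonneg (hp i) le_rfl
  calc ∑ i with ∃ a ∈ A, P a i, p i
      ≤ ∑ i with ∃ a ∈ A, P a i, ∑ a ∈ A, if P a i then p i else 0 :=
        sum_le_sum fun i hi => by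
          obtain ⟨a, ha, hPa⟩ := (mem_filter.mp hi).2
          exact le_of_eq_of_le (if_pos hPa).symm
            (single_le_sum (f := fun a => if P a i then p i else 0) (fun a _ => hterm a i) ha)
    _ ≤ ∑ i, ∑ a ∈ A, if P a i then p i else 0 :=
        sum_le_sum_of_subset_of_nonneg (filter_subset _ _) fun i _ _ =>
          sum_nonneg fun a _ => hterm a i
    _ = _ := by rw [sum_comm]; simp only [sum_filter]

theorem nonempty_inter_of_one_lt_sum_add_sum {ι : Type*} [Fintype ι] [DecidableEq ι]
    {p : ι → ℝ} (hp : ∀ i, 0 ≤ p i) (hp1 : ∑ i, p i ≤ 1) {s t : Finset ι}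
    (h : 1 < ∑ i ∈ s, p i + ∑ i ∈ t, p i) : (s ∩ t).Nonempty := by
  rw [nonempty_iff_ne_empty]
  intro hst
  rw [← sum_union_inter, hst, sum_empty, add_zero] at h
  linarith [sum_le_univ_sum_of_nonneg (s := s ∪ t) hp]

end Finset

namespace PermPattern

variable {k m n : ℕ}

/-- The subpermutation of `σ` induced by the `m`-set `Y`. -/
noncomputable def pattern (σ : Perm (Fin n)) (Y : Finset (Fin n)) (h : #Y = m) :
    Perm (Fin m) :=
  ((Y.orderIsoOfFin h).toEquiv.trans
      (σ.subtypeEquiv fun _ => (mem_map' σ.toEmbedding).symm)).trans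
    ((Y.map σ.toEmbedding).orderIsoOfFin ((card_map _).trans h)).symm.toEquiv

theorem pattern_lt_pattern_iff (σ : Perm (Fin n)) (Y : Finset (Fin n)) (h : #Y = m)
    (i j : Fin m) :
    pattern σ Y h i < pattern σ Y h j ↔ σ (Y.orderEmbOfFin h i) < σ (Y.orderEmbOfFin h j) := by
  simp only [pattern, Equiv.trans_apply, RelIso.coe_fn_toEquiv, OrderIso.lt_iff_lt]
  simp [Subtype.mk_lt_mk, ← coe_orderIsoOfFin_apply]

theorem eq_of_lt_iff_lt {p q : Perm (Fin k)} (h : ∀ i j, p i < p j ↔ q i < q j) : p = q := by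
  have hmono : StrictMono (q ∘ p.symm) := fun x y hxy => by
    simpa using (h (p.symm x) (p.symm y)).mp (by simpa using hxy)
  exact Equiv.ext fun i => by simpa using (congrFun hmono.eq_id (p i)).symm

theorem pattern_eq_iff_isOcc (σ : Perm (Fin n)) (Y : Finset (Fin n)) (h : #Y = m)
    (π : Perm (Fin m)) : pattern σ Y h = π ↔ IsOcc π σ (Y.orderEmbOfFin h) := by
  constructor
  · rintro rfl
    exact ⟨(Y.orderEmbOfFin h).strictMono, pattern_lt_pattern_iff σ Y h⟩
  · rintro ⟨-, hπ⟩
    exact eq_of_lt_iff_lt fun i j => by rw [pattern_lt_pattern_iff, hπ]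

open scoped Classical in
/-- `pattern`, extended by `1` to sets of the wrong size. -/
noncomputable def patternOf (σ : Perm (Fin n)) (m : ℕ) (Y : Finset (Fin n)) : Perm (Fin m) :=
  if h : #Y = m then pattern σ Y h else 1

theorem patternOf_eq (σ : Perm (Fin n)) {Y : Finset (Fin n)} (h : #Y = m) :
    patternOf σ m Y = pattern σ Y h := dif_pos h

noncomputable def patternFiber (π : Perm (Fin m)) (σ : Perm (Fin n)) : Finset (Finset (Fin n)) :=
  {Y ∈ powersetCard m univ | patternOf σ m Y = π}

theorem card_of_mem_patternFiber {τ : Perm (Fin k)} {σ : Perm (Fin n)} {Z : Finset (Fin n)}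
    (hZ : Z ∈ patternFiber τ σ) : #Z = k :=
  mem_powersetCard_univ.mp (mem_filter.mp hZ).1

noncomputable def occEquivPatternFiber (π : Perm (Fin m)) (σ : Perm (Fin n)) :
    {f : Fin m → Fin n // IsOcc π σ f} ≃ patternFiber π σ where
  toFun f := ⟨univ.image f.1, by
    have hcard : #(univ.image f.1) = m := by
      rw [card_image_of_injective _ f.2.1.injective, card_univ, Fintype.card_fin]
    have hf : f.1 = (univ.image f.1).orderEmbOfFin hcard :=
      orderEmbOfFin_unique hcard (fun x => mem_image_of_mem _ (mem_univ x)) f.2.1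
    refine mem_filter.mpr ⟨mem_powersetCard_univ.mpr hcard, ?_⟩
    rw [patternOf_eq σ hcard, pattern_eq_iff_isOcc, ← hf]
    exact f.2⟩
  invFun Y := ⟨Y.1.orderEmbOfFin (mem_powersetCard_univ.mp (mem_filter.mp Y.2).1), by
    obtain ⟨hcard, hY⟩ := mem_filter.mp Y.2
    rw [← pattern_eq_iff_isOcc, ← patternOf_eq]
    exact hY⟩
  left_inv f := by
    have hcard : #(univ.image f.1) = m := by
      rw [card_image_of_injective _ f.2.1.injective, card_univ, Fintype.card_fin]
    exact Subtype.ext (orderEmbOfFin_unique hcard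
      (fun x => mem_image_of_mem _ (mem_univ x)) f.2.1).symm
  right_inv Y := Subtype.ext (image_orderEmbOfFin_univ _ _)

theorem lam_eq_card_patternFiber (π : Perm (Fin m)) (σ : Perm (Fin n)) :
    lam π σ = #(patternFiber π σ) := by
  rw [lam, Nat.card_congr (occEquivPatternFiber π σ), Nat.card_eq_fintype_card,
    Fintype.card_coe]

theorem lam_le_choose (π : Perm (Fin m)) (σ : Perm (Fin n)) : lam π σ ≤ n.choose m := by
  rw [lam_eq_card_patternFiber]
  exact (card_filter_le _ _).trans_eq (by simp)

theorem sum_lam (σ : Perm (Fin n)) (m : ℕ) : ∑ π : Perm (Fin m), lam π σ = n.choose m := by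
  have h := card_eq_sum_card_fiberwise (f := patternOf σ m)
    (s := powersetCard m (univ : Finset (Fin n))) (t := univ) fun _ _ => mem_univ _
  simp only [card_powersetCard, card_univ, Fintype.card_fin] at h
  rw [h]
  exact sum_congr rfl fun π _ => lam_eq_card_patternFiber π σ

theorem dens_of_le (π : Perm (Fin m)) (σ : Perm (Fin n)) (hmn : m ≤ n) :
    dens π σ = lam π σ / n.choose m := if_pos hmn

theorem dens_nonneg (π : Perm (Fin m)) (σ : Perm (Fin n)) : 0 ≤ dens π σ := by
  unfold dens; positivity

theorem dens_le_one (π : Perm (Fin m)) (σ : Perm (Fin n)) : dens π σ ≤ 1 := by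
  unfold dens
  split_ifs with h
  · exact div_le_one_of_le₀ (mod_cast lam_le_choose π σ) (Nat.cast_nonneg _)
  · exact zero_le_one

theorem sum_dens (σ : Perm (Fin n)) (hmn : m ≤ n) : ∑ π : Perm (Fin m), dens π σ = 1 := by
  simp only [dens, if_pos hmn, ← sum_div, ← Nat.cast_sum, sum_lam]
  exact div_self (mod_cast (Nat.choose_pos hmn).ne')

theorem patternOf_map_orderEmbOfFin (σ : Perm (Fin n)) {Y : Finset (Fin n)} (hY : #Y = m)
    (k : ℕ) (W : Finset (Fin m)) :
    patternOf σ k (W.map (Y.orderEmbOfFin hY).toEmbedding) = patternOf (pattern σ Y hY) k W := by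
  set e := Y.orderEmbOfFin hY
  by_cases hW : #W = k
  · have hW' : #(W.map e.toEmbedding) = k := (card_map _).trans hW
    have he : ⇑((W.map e.toEmbedding).orderEmbOfFin hW') = e ∘ W.orderEmbOfFin hW :=
      orderEmbOfFin_unique hW' (fun i => mem_map_of_mem _ (orderEmbOfFin_mem W hW i))
        (e.strictMono.comp (W.orderEmbOfFin hW).strictMono) |>.symm
    rw [patternOf_eq σ hW', patternOf_eq _ hW]
    refine eq_of_lt_iff_lt fun i j => ?_
    rw [pattern_lt_pattern_iff, pattern_lt_pattern_iff, pattern_lt_pattern_iff, he]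
    rfl
  · rw [patternOf, patternOf, dif_neg (by rwa [card_map]), dif_neg hW]

theorem map_patternFiber_pattern (τ : Perm (Fin k)) (σ : Perm (Fin n)) {Y : Finset (Fin n)}
    (hY : #Y = m) :
    (patternFiber τ (pattern σ Y hY)).map
        (mapEmbedding (Y.orderEmbOfFin hY).toEmbedding).toEmbedding
      = {Z ∈ patternFiber τ σ | Z ⊆ Y} := by
  set E := (mapEmbedding (Y.orderEmbOfFin hY).toEmbedding).toEmbedding
  have hE : ∀ W, patternOf σ k (E W) = patternOf (pattern σ Y hY) k W :=
    patternOf_map_orderEmbOfFin σ hY k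
  have hpow : (powersetCard k univ).map E = powersetCard k Y := by
    rw [← powersetCard_map, map_orderEmbOfFin_univ]
  calc _ = ((powersetCard k univ).map E).filter (fun Z => patternOf σ k Z = τ) := by
        simp only [patternFiber, ← hE, filter_map]; rfl
    _ = _ := by
        rw [hpow]
        ext Z
        simp only [patternFiber, mem_filter, mem_powersetCard, subset_univ, true_and]
        tauto

theorem lam_pattern (τ : Perm (Fin k)) (σ : Perm (Fin n)) {Y : Finset (Fin n)} (hY : #Y = m) :
    lam τ (pattern σ Y hY) = #{Z ∈ patternFiber τ σ | Z ⊆ Y} := by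
  rw [lam_eq_card_patternFiber, ← map_patternFiber_pattern τ σ hY, card_map]

noncomputable def disjointPairs (τ : Perm (Fin k)) (σ : Perm (Fin n)) :
    Finset (Finset (Fin n) × Finset (Fin n)) :=
  {p ∈ patternFiber τ σ ×ˢ patternFiber τ σ | Disjoint p.1 p.2}

theorem card_disjointPairs_pattern (τ : Perm (Fin k)) (σ : Perm (Fin n)) {Y : Finset (Fin n)}
    (hY : #Y = m) :
    #(disjointPairs τ (pattern σ Y hY)) = #{p ∈ disjointPairs τ σ | p.1 ∪ p.2 ⊆ Y} := by
  calc #(disjointPairs τ (pattern σ Y hY))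
      = #{p ∈ {Z ∈ patternFiber τ σ | Z ⊆ Y} ×ˢ {Z ∈ patternFiber τ σ | Z ⊆ Y} |
          Disjoint p.1 p.2} := by
        rw [← map_patternFiber_pattern, ← prodMap_map_product, filter_map, card_map,
          disjointPairs]
        congr 1
        exact filter_congr fun p _ => (Finset.disjoint_map _).symm
    _ = _ := by
        congr 1
        ext p
        simp only [disjointPairs, mem_filter, mem_product, union_subset_iff]
        tauto

theorem sum_mul_lam (σ : Perm (Fin n)) (F : Perm (Fin m) → ℕ) :
    ∑ π, F π * lam π σ = ∑ Y ∈ powersetCard m univ, F (patternOf σ m Y) := by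
  rw [← sum_fiberwise_of_maps_to (g := patternOf σ m) fun _ _ => mem_univ _]
  refine sum_congr rfl fun π _ => ?_
  rw [sum_congr rfl fun Y hY => congrArg F (mem_filter.mp hY).2, sum_const, smul_eq_mul,
    lam_eq_card_patternFiber, mul_comm, patternFiber]

theorem sum_lam_mul_lam (τ : Perm (Fin k)) (σ : Perm (Fin n)) (hkm : k ≤ m) :
    ∑ π : Perm (Fin m), lam τ π * lam π σ = lam τ σ * (n - k).choose (m - k) := by
  have hcount := sum_card_filter_subset (patternFiber τ σ) id
    (fun _ => card_of_mem_patternFiber) hkm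
  rw [Fintype.card_fin] at hcount
  rw [sum_mul_lam, lam_eq_card_patternFiber, ← hcount]
  refine sum_congr rfl fun Y hY => ?_
  rw [patternOf_eq σ (mem_powersetCard_univ.mp hY), lam_pattern]
  rfl

theorem sum_card_disjointPairs_mul_lam (τ : Perm (Fin k)) (σ : Perm (Fin n)) (hkm : 2 * k ≤ m) :
    ∑ π : Perm (Fin m), #(disjointPairs τ π) * lam π σ
      = #(disjointPairs τ σ) * (n - 2 * k).choose (m - 2 * k) := by
  have hcard : ∀ p ∈ disjointPairs τ σ, #(p.1 ∪ p.2) = 2 * k := fun p hp => by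
    obtain ⟨hp, hdisj⟩ := mem_filter.mp hp
    rw [card_union_of_disjoint hdisj, card_of_mem_patternFiber (mem_product.mp hp).1,
      card_of_mem_patternFiber (mem_product.mp hp).2, two_mul]
  have hcount := sum_card_filter_subset (disjointPairs τ σ) _ hcard hkm
  rw [Fintype.card_fin] at hcount
  rw [sum_mul_lam, ← hcount]
  refine sum_congr rfl fun Y hY => ?_
  rw [patternOf_eq σ (mem_powersetCard_univ.mp hY), card_disjointPairs_pattern]

theorem card_disjointPairs_le (τ : Perm (Fin k)) (σ : Perm (Fin n)) :
    #(disjointPairs τ σ) ≤ lam τ σ ^ 2 := by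
  rw [sq, lam_eq_card_patternFiber, ← card_product]
  exact card_filter_le _ _

theorem lam_sq_le (τ : Perm (Fin k)) (σ : Perm (Fin n)) :
    lam τ σ ^ 2 ≤ #(disjointPairs τ σ) + lam τ σ * (k * (n - 1).choose (k - 1)) := by
  set F := patternFiber τ σ
  have hoverlap : #{p ∈ F ×ˢ F | ¬Disjoint p.1 p.2} ≤ #F * (k * (n - 1).choose (k - 1)) := by
    rw [card_filter, sum_product, ← smul_eq_mul, ← sum_const]
    refine sum_le_sum fun Z hZ => ?_
    rw [← card_filter]
    refine (card_le_card (filter_subset_filter _ (filter_subset _ _))).trans ?_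
    simpa using card_powersetCard_filter_not_disjoint_le (card_of_mem_patternFiber hZ)
  rw [sq, lam_eq_card_patternFiber, ← card_product,
    ← card_filter_add_card_filter_not (p := fun p : Finset (Fin n) × _ => Disjoint p.1 p.2)]
  exact Nat.add_le_add_left hoverlap _

theorem sum_lam_sq_mul_lam_le (τ : Perm (Fin k)) (σ : Perm (Fin n)) (h2k : 2 * k ≤ m) :
    ∑ π : Perm (Fin m), lam τ π ^ 2 * lam π σ
      ≤ lam τ σ ^ 2 * (n - 2 * k).choose (m - 2 * k)
        + k * (m - 1).choose (k - 1) * (lam τ σ * (n - k).choose (m - k)) :=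
  calc ∑ π : Perm (Fin m), lam τ π ^ 2 * lam π σ
      ≤ ∑ π : Perm (Fin m), (#(disjointPairs τ π) * lam π σ
          + k * (m - 1).choose (k - 1) * (lam τ π * lam π σ)) :=
        sum_le_sum fun π _ => by
          have := Nat.mul_le_mul_right (lam π σ) (lam_sq_le τ π)
          linarith
    _ = #(disjointPairs τ σ) * (n - 2 * k).choose (m - 2 * k)
          + k * (m - 1).choose (k - 1) * (lam τ σ * (n - k).choose (m - k)) := by
        rw [sum_add_distrib, ← mul_sum, sum_card_disjointPairs_mul_lam τ σ h2k,
          sum_lam_mul_lam τ σ (by omega)]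
    _ ≤ _ := by
        have := card_disjointPairs_le τ σ
        gcongr

theorem sum_dens_mul_dens (τ : Perm (Fin k)) (σ : Perm (Fin n)) (hkm : k ≤ m) (hmn : m ≤ n) :
    ∑ π : Perm (Fin m), dens τ π * dens π σ = dens τ σ := by
  have hchain : (n.choose m * m.choose k : ℝ) = n.choose k * (n - k).choose (m - k) := by
    exact_mod_cast Nat.choose_mul hkm
  have hpos : ∀ {a b : ℕ}, b ≤ a → (0 : ℝ) < a.choose b := fun h => mod_cast Nat.choose_pos h
  simp only [dens_of_le _ _ hkm, dens_of_le _ _ hmn, dens_of_le _ _ (hkm.trans hmn),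
    div_mul_div_comm, ← sum_div]
  simp only [← Nat.cast_mul, ← Nat.cast_sum, sum_lam_mul_lam τ σ hkm]
  push_cast
  rw [div_eq_div_iff (mul_pos (hpos hkm) (hpos hmn)).ne' (hpos (hkm.trans hmn)).ne']
  linear_combination (lam τ σ : ℝ) * hchain.symm

theorem sum_dens_sq_mul_dens_le (τ : Perm (Fin k)) (σ : Perm (Fin n)) (h2k : 2 * k ≤ m)
    (hmn : m ≤ n) :
    ∑ π : Perm (Fin m), dens τ π ^ 2 * dens π σ ≤ dens τ σ ^ 2 + k ^ 2 / m := by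
  have hkm : k ≤ m := by omega
  have hpos : ∀ {a b : ℕ}, b ≤ a → (0 : ℝ) < a.choose b := fun h => mod_cast Nat.choose_pos h
  have hL : (lam τ σ : ℝ) = dens τ σ * n.choose k := by
    rw [dens_of_le _ _ (hkm.trans hmn), div_mul_cancel₀ _ (hpos (hkm.trans hmn)).ne']
  have hchain : (n.choose k * (n - k).choose (m - k) : ℝ) = n.choose m * m.choose k := by
    exact_mod_cast (Nat.choose_mul hkm).symm
  have hbin : (n.choose k ^ 2 * (n - 2 * k).choose (m - 2 * k) : ℝ)
      ≤ m.choose k ^ 2 * n.choose m := by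
    exact_mod_cast Nat.choose_sq_mul_choose_le h2k hmn
  have hB : (k * (m - 1).choose (k - 1) : ℝ) = k ^ 2 / m * m.choose k := by
    rcases Nat.eq_zero_or_pos m with rfl | hm
    · obtain rfl : k = 0 := by omega
      simp
    rw [div_mul_eq_mul_div, eq_div_iff (by positivity), mul_comm]
    exact_mod_cast Nat.mul_mul_choose_sub_one m k
  have hnat : (∑ π : Perm (Fin m), lam τ π ^ 2 * lam π σ : ℝ)
      ≤ lam τ σ ^ 2 * (n - 2 * k).choose (m - 2 * k)
        + k * (m - 1).choose (k - 1) * (lam τ σ * (n - k).choose (m - k)) := by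
    exact_mod_cast sum_lam_sq_mul_lam_le τ σ h2k
  simp only [dens_of_le _ _ hkm, dens_of_le _ _ hmn, div_pow, div_mul_div_comm, ← sum_div]
  rw [div_le_iff₀ (mul_pos (pow_pos (hpos hkm) 2) (hpos hmn))]
  have ht := dens_le_one τ σ
  calc _ ≤ (dens τ σ * n.choose k) ^ 2 * (n - 2 * k).choose (m - 2 * k)
        + k ^ 2 / m * m.choose k * (dens τ σ * n.choose k * (n - k).choose (m - k)) := by
        rw [← hL, ← hB]; exact_mod_cast hnat
    _ = dens τ σ ^ 2 * (n.choose k ^ 2 * (n - 2 * k).choose (m - 2 * k))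
        + k ^ 2 / m * dens τ σ * (m.choose k * (n.choose k * (n - k).choose (m - k))) := by ring
    _ ≤ dens τ σ ^ 2 * (m.choose k ^ 2 * n.choose m)
        + k ^ 2 / m * 1 * (m.choose k * (n.choose m * m.choose k)) := by
        rw [hchain]; gcongr
    _ = _ := by ring

theorem sum_sq_sub_dens_mul_dens_le (τ : Perm (Fin k)) (σ : Perm (Fin n)) (h2k : 2 * k ≤ m)
    (hmn : m ≤ n) :
    ∑ π : Perm (Fin m), (dens τ π - dens τ σ) ^ 2 * dens π σ ≤ k ^ 2 / m := by
  have hexpand : ∀ π : Perm (Fin m), (dens τ π - dens τ σ) ^ 2 * dens π σ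
      = dens τ π ^ 2 * dens π σ - 2 * dens τ σ * (dens τ π * dens π σ)
        + dens τ σ ^ 2 * dens π σ := fun π => by ring
  simp only [hexpand, sum_add_distrib, sum_sub_distrib, ← mul_sum,
    sum_dens_mul_dens τ σ (by omega) hmn, sum_dens σ hmn]
  linarith [sum_dens_sq_mul_dens_le τ σ h2k hmn]

theorem sum_dens_filter_le (τ : Perm (Fin k)) (σ : Perm (Fin n)) (h2k : 2 * k ≤ m)
    (hmn : m ≤ n) {δ : ℝ} (hδ : 0 < δ) :
    ∑ π : Perm (Fin m) with δ ≤ |dens τ π - dens τ σ|, dens π σ ≤ k ^ 2 / (m * δ ^ 2) := by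
  rw [← div_div, le_div_iff₀ (by positivity), sum_mul]
  calc ∑ π : Perm (Fin m) with δ ≤ |dens τ π - dens τ σ|, dens π σ * δ ^ 2
      ≤ ∑ π : Perm (Fin m) with δ ≤ |dens τ π - dens τ σ|, (dens τ π - dens τ σ) ^ 2 * dens π σ :=
        sum_le_sum fun π hπ => by
          rw [mul_comm, ← sq_abs (dens τ π - dens τ σ)]
          gcongr
          · exact dens_nonneg π σ
          · exact (mem_filter.mp hπ).2
    _ ≤ ∑ π, (dens τ π - dens τ σ) ^ 2 * dens π σ :=
        sum_le_sum_of_subset_of_nonneg (filter_subset _ _) fun π _ _ =>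
          mul_nonneg (sq_nonneg _) (dens_nonneg π σ)
    _ ≤ k ^ 2 / m := sum_sq_sub_dens_mul_dens_le τ σ h2k hmn

end PermPattern

open PermPattern

theorem Testable.finitelyApproximable {f : Perms → ℝ} (hf : Testable f) :
    FinitelyApproximable f := by
  intro ε hε
  obtain ⟨n₀, ft, hft⟩ := hf (min (ε / 2) (1 / 4)) (by positivity)
  set ε' := min (ε / 2) (1 / 4)
  set N : ℝ := ((Fintype.card (Perm (Fin n₀)) : ℕ) : ℝ) with hN
  set δ : ℝ := 1 / (2 * (N + 1))
  refine ⟨δ, by positivity, n₀, univ.image fun π => ⟨n₀, π⟩, fun σ ρ hσ hρ hclose => ?_⟩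
  let good (x : Perms) : Finset (Perm (Fin n₀)) := {π | |f x - ft π| < ε'}
  have hgood : ∀ x : Perms, n₀ ≤ x.1 → 1 - ε' ≤ ∑ π ∈ good x, dens π x.2 := fun x hx => by
    simpa only [good, sum_filter, subDens] using hft x hx
  have hshift : ∑ π ∈ good σ, dens π σ.2 ≤ ∑ π ∈ good σ, dens π ρ.2 + N * δ :=
    calc _ ≤ ∑ π ∈ good σ, (dens π ρ.2 + δ) := sum_le_sum fun π _ =>
          (sub_lt_iff_lt_add'.mp (abs_sub_lt_iff.mp
            (hclose ⟨n₀, π⟩ (mem_image_of_mem _ (mem_univ π)))).1).le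
      _ ≤ _ := by
          rw [sum_add_distrib, sum_const, nsmul_eq_mul, hN]
          gcongr
          exact_mod_cast card_le_univ (good σ)
  have hNδ : N * δ < 1 / 2 := by
    rw [mul_one_div, div_lt_iff₀ (by positivity)]
    linarith
  obtain ⟨π, hπ⟩ := nonempty_inter_of_one_lt_sum_add_sum (dens_nonneg · ρ.2)
    (sum_dens ρ.2 hρ).le (s := good σ) (t := good ρ)
    (by linarith [hgood σ hσ, hgood ρ hρ, min_le_right (ε / 2) (1 / 4)])
  obtain ⟨hπσ, hπρ⟩ := mem_inter.mp hπ
  calc |f σ - f ρ| ≤ |f σ - ft π| + |ft π - f ρ| := abs_sub_le _ _ _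
    _ < ε' + ε' := by
        rw [abs_sub_comm (ft π)]
        exact add_lt_add (mem_filter.mp hπσ).2 (mem_filter.mp hπρ).2
    _ ≤ ε := by linarith [min_le_left (ε / 2) (1 / 4)]

theorem FinitelyApproximable.testable {f : Perms → ℝ} (hf : FinitelyApproximable f) :
    Testable f := by
  intro ε hε
  obtain ⟨δ, hδ, n₀, A, hA⟩ := hf ε hε
  obtain ⟨m, hn₀m, hAm, hmε⟩ : ∃ m : ℕ, n₀ ≤ m ∧ (∀ τ ∈ A, 2 * τ.1 ≤ m) ∧
      (∑ τ ∈ A, (τ.1 : ℝ) ^ 2 / δ ^ 2) / m ≤ ε :=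
    ((eventually_ge_atTop n₀).and (((eventually_all_finset A).mpr fun τ _ =>
      eventually_ge_atTop (2 * τ.1)).and
        ((tendsto_const_div_atTop_nhds_zero_nat _).eventually (ge_mem_nhds hε)))).exists
  refine ⟨m, fun π => f ⟨m, π⟩, fun σ hσ => ?_⟩
  have hbad : ∑ π : Perm (Fin m) with ¬|f σ - f ⟨m, π⟩| < ε, dens π σ.2 ≤ ε :=
    calc _ ≤ ∑ π : Perm (Fin m) with ∃ τ ∈ A, δ ≤ |dens τ.2 π - dens τ.2 σ.2|, dens π σ.2 := by
          refine sum_le_sum_of_subset_of_nonneg (fun π hπ => mem_filter.mpr ⟨mem_univ π, ?_⟩)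
            fun π _ _ => dens_nonneg π σ.2
          by_contra! hnear
          exact (mem_filter.mp hπ).2 (hA σ ⟨m, π⟩ (hn₀m.trans hσ) hn₀m fun τ hτ => by
            rw [abs_sub_comm]; exact hnear τ hτ)
      _ ≤ ∑ τ ∈ A, ∑ π : Perm (Fin m) with δ ≤ |dens τ.2 π - dens τ.2 σ.2|, dens π σ.2 :=
          sum_filter_exists_le A _ fun π => dens_nonneg π σ.2
      _ ≤ ∑ τ ∈ A, (τ.1 : ℝ) ^ 2 / (m * δ ^ 2) :=
          sum_le_sum fun τ hτ => sum_dens_filter_le τ.2 σ.2 (hAm τ hτ) hσ hδ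
      _ ≤ ε := by simpa only [sum_div, div_div, mul_comm] using hmε
  have hsplit := sum_filter_add_sum_filter_not univ (fun π => |f σ - f ⟨m, π⟩| < ε) (dens · σ.2)
  rw [sum_dens σ.2 hσ] at hsplit
  simp only [subDens, ← sum_filter]
  linarith

theorem testable_iff_finitelyApproximable_general (f : Perms → ℝ) :
    Testable f ↔ FinitelyApproximable f :=
  ⟨Testable.finitelyApproximable, FinitelyApproximable.testable⟩

/-- **Lemma (Hoppen–Kohayakawa–Moreira–Sampaio).** A bounded permutation
parameter is testable if and only if it is finitely approximable. -/
theorem testable_iff_finitelyApproximable (f : Perms → ℝ) (M : ℝ)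
    (hbd : ∀ σ : Perms, |f σ| ≤ M) :
    Testable f ↔ FinitelyApproximable f :=
  testable_iff_finitelyApproximable_general f
end

section
/- Let (τ_i)_{i∈ℕ} be a sequence of permutations of strictly increasing orders and let (γ_k)_{k≥2} be positive reals with the following property: for every k ≥ 2, every δ > 0 and every N ∈ ℕ there exist permutations σ and σ' of orders at least N such that |t(ρ,σ) − t(ρ,σ')| < δ for every permutation ρ of order at most |τ_{k−1}|, and t(τ_k,σ) − t(τ_k,σ') > γ_k − δ. Let (α_i)_{i∈ℕ} be positive reals satisfying Σ_{i∈ℕ} α_i < 1/2 and Σ_{i>k} α_i < α_k·γ_k/4 for every k ≥ 2. Then the permutation parameter f(σ) = Σ_{i∈ℕ} α_i·t(τ_i,σ) is not finitely forcible. -/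
/-! If a finite family `A` forced the parameter, pick `k` with `|τ_{k-1}|` above every order in `A`.
The oscillation hypothesis yields `σ, σ'` that `A` cannot tell apart (nor can any `τ_i`, `i < k`)
while `t(τ_k, ·)` differs by almost `γ_k`. Weighted by `α_k` this is a gap of almost `α_k γ_k` in
the parameter, of which the terms `i > k` can cancel at most `Σ_{i>k} α_i < α_k γ_k / 4`; so the
parameter values stay `α_k γ_k / 4` apart, contradicting forcibility. -/

open Filter Topology

lemma lam_le_choose {k n : ℕ} (π : Equiv.Perm (Fin k)) (σ : Equiv.Perm (Fin n)) :
    lam π σ ≤ n.choose k :=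
  calc lam π σ ≤ Nat.card (Fin k ↪o Fin n) :=
        Nat.card_le_card_of_injective (fun f => OrderEmbedding.ofStrictMono f.1 f.2.1)
          fun _ _ h => Subtype.ext (congrArg (⇑) h)
    _ = n.choose k := by
        rw [Nat.card_congr Set.powersetCard.ofFinEmbEquiv, Set.powersetCard.card, Nat.card_fin]

lemma dens_nonneg {k n : ℕ} (π : Equiv.Perm (Fin k)) (σ : Equiv.Perm (Fin n)) :
    0 ≤ dens π σ := by
  unfold dens
  split_ifs <;> positivity

lemma dens_le_one {k n : ℕ} (π : Equiv.Perm (Fin k)) (σ : Equiv.Perm (Fin n)) :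
    dens π σ ≤ 1 := by
  unfold dens
  split_ifs with h
  · rw [div_le_one (by exact_mod_cast Nat.choose_pos h)]
    exact_mod_cast lam_le_choose π σ
  · exact zero_le_one

lemma subDens_nonneg (π σ : Perms) : 0 ≤ subDens π σ := dens_nonneg _ _

lemma subDens_le_one (π σ : Perms) : subDens π σ ≤ 1 := dens_le_one _ _

lemma abs_subDens_sub_subDens_le_one (π σ σ' : Perms) :
    |subDens π σ - subDens π σ'| ≤ 1 :=
  abs_sub_le_of_nonneg_of_le (subDens_nonneg _ _) (subDens_le_one _ _)
    (subDens_nonneg _ _) (subDens_le_one _ _)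

lemma summable_mul_of_abs_le {ι : Type*} {α d : ι → ℝ} {C : ℝ} (hα : Summable α)
    (hd : ∀ i, |d i| ≤ C) : Summable fun i => α i * d i :=
  (hα.abs.mul_right C).of_norm_bounded fun i => by
    rw [Real.norm_eq_abs, abs_mul]
    exact mul_le_mul_of_nonneg_left (hd i) (abs_nonneg _)

lemma summable_mul_subDens {α : ℕ → ℝ} (hα : Summable α) (τ : ℕ → Perms) (σ : Perms) :
    Summable fun i => α i * subDens (τ i) σ :=
  summable_mul_of_abs_le hα fun _ => (abs_of_nonneg (subDens_nonneg _ _)).trans_le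
    (subDens_le_one _ _)

/-- The left side is the sum of `c α_k 𝟙_{i = k} - η α_i - C α_i 𝟙_{i > k}`, a termwise
minorant of `α_i d_i`. -/
lemma le_tsum_mul_of_bounds {α d : ℕ → ℝ} {C η c : ℝ} {k : ℕ} (hα : ∀ i, 0 ≤ α i)
    (hs : Summable α) (hd : ∀ i, |d i| ≤ C) (hη : 0 ≤ η) (hlow : ∀ i < k, -η ≤ d i)
    (hk : c - η ≤ d k) :
    α k * c - η * ∑' i, α i - C * ∑' i : {i // k < i}, α i ≤ ∑' i, α i * d i := by
  set tail : Set ℕ := {i | k < i}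
  have hpoint : ∀ i, (if i = k then α k * c else 0) - η * α i - C * tail.indicator α i
      ≤ α i * d i := by
    intro i
    rcases lt_trichotomy i k with hi | rfl | hi
    · have : i ∉ tail := hi.not_gt
      rw [if_neg hi.ne, Set.indicator_of_notMem this]
      nlinarith [hlow i hi, hα i]
    · have : i ∉ tail := lt_irrefl i
      rw [if_pos rfl, Set.indicator_of_notMem this]
      nlinarith [hα i]
    · have : i ∈ tail := hi
      rw [if_neg hi.ne', Set.indicator_of_mem this]
      nlinarith [neg_le_of_abs_le (hd i), hα i]
  have hpeak : Summable fun i => if i = k then α k * c else 0 := (hasSum_ite_eq _ _).summable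
  have hspread := hs.mul_left η
  have htail := (hs.indicator tail).mul_left C
  calc α k * c - η * ∑' i, α i - C * ∑' i : {i // k < i}, α i
      = ∑' i, ((if i = k then α k * c else 0) - η * α i - C * tail.indicator α i) := by
        rw [(hpeak.sub hspread).tsum_sub htail, hpeak.tsum_sub hspread, tsum_ite_eq,
          tsum_mul_left, tsum_mul_left, ← tsum_subtype]
        rfl
    _ ≤ ∑' i, α i * d i :=
        ((hpeak.sub hspread).sub htail).tsum_le_tsum hpoint (summable_mul_of_abs_le hs hd)

theorem not_finitelyForcible_of_oscillation_general (τ : ℕ → Perms)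
    (horders : StrictMono fun i => (τ i).1)
    (γ : ℕ → ℝ)
    (hosc : ∀ k, 2 ≤ k → ∀ δ : ℝ, 0 < δ → ∀ N : ℕ,
      ∃ σ σ' : Perms, N ≤ σ.1 ∧ N ≤ σ'.1 ∧
        (∀ ρ : Perms, ρ.1 ≤ (τ (k - 1)).1 → |subDens ρ σ - subDens ρ σ'| < δ) ∧
        γ k - δ < subDens (τ k) σ - subDens (τ k) σ')
    (α : ℕ → ℝ) (hpos : ∀ i, 0 < α i) (hsummable : Summable α)
    (htail : ∀ k, 2 ≤ k → ∑' i : {i : ℕ // k < i}, α i.1 < α k * γ k / 4) :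
    ¬ FinitelyForcible (fun σ => ∑' i, α i * subDens (τ i) σ) := by
  rintro ⟨A, hA⟩
  -- `k - 1` bounds the orders of all members of `A`, so `A` cannot see the oscillation at `τ k`.
  set k := A.sup (fun ρ => ρ.1) + 2
  have hk : 2 ≤ k := by omega
  have hA_le : ∀ ρ ∈ A, ρ.1 ≤ (τ (k - 1)).1 := fun ρ hρ =>
    (Finset.le_sup (f := fun ρ : Perms => ρ.1) hρ).trans (by grind [horders.le_apply (x := k - 1)])
  set ε := α k * γ k / 4 with hε_def
  have hε : 0 < ε := (tsum_nonneg fun i : {i // k < i} => (hpos i).le).trans_lt (htail k hk)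
  obtain ⟨n₀, δ, hδ, hforce⟩ := hA ε hε
  have hmass : 0 < ∑' i, α i + 1 :=
    add_pos_of_nonneg_of_pos (tsum_nonneg fun i => (hpos i).le) one_pos
  set η := min δ (ε / (∑' i, α i + 1))
  have hη : 0 < η := lt_min hδ (div_pos hε hmass)
  have hηmass : η * ∑' i, α i ≤ ε :=
    calc η * ∑' i, α i ≤ η * (∑' i, α i + 1) := by linarith
      _ ≤ ε := (le_div_iff₀ hmass).mp (min_le_right _ _)
  obtain ⟨σ, σ', hσ, hσ', hclose, hgap⟩ := hosc k hk η hη n₀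
  have hnear := hforce σ σ' hσ hσ' fun ρ hρ =>
    (hclose ρ (hA_le ρ hρ)).trans_le (min_le_left _ _)
  have hlow : ∀ i < k, -η ≤ subDens (τ i) σ - subDens (τ i) σ' := fun i hi =>
    (abs_lt.mp (hclose (τ i) (horders.monotone (by omega)))).1.le
  have hfar := le_tsum_mul_of_bounds (fun i => (hpos i).le) hsummable
    (fun i => abs_subDens_sub_subDens_le_one (τ i) σ σ') hη.le hlow hgap.le
  rw [← (summable_mul_subDens hsummable τ σ).tsum_sub (summable_mul_subDens hsummable τ σ')]
    at hnear
  simp only [← mul_sub] at hnear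
  -- `hfar` bounds the difference below by `4ε - ε - ε`.
  linarith [(abs_lt.mp hnear).2, htail k hk]

/-- **Lemma (non-forcibility).** Let `(τ_i)` be a sequence of permutations of
strictly increasing orders and `(γ_k)` positive reals such that for every `k ≥ 2`,
every `δ > 0` and every `N` there are permutations `σ, σ'` of orders at least `N`
agreeing within `δ` on all densities of permutations of order at most `|τ_{k−1}|`
but with `t(τ_k,σ) − t(τ_k,σ') > γ_k − δ`.  If `(α_i)` are positive reals with
`Σ α_i < 1/2` and `Σ_{i>k} α_i < α_k·γ_k/4` for every `k ≥ 2`, then the parameter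
`f(σ) = Σ_i α_i · t(τ_i,σ)` is not finitely forcible. -/
theorem not_finitelyForcible_of_oscillation (τ : ℕ → Perms)
    (horders : StrictMono fun i => (τ i).1)
    (γ : ℕ → ℝ) (hγ : ∀ k, 2 ≤ k → 0 < γ k)
    (hosc : ∀ k, 2 ≤ k → ∀ δ : ℝ, 0 < δ → ∀ N : ℕ,
      ∃ σ σ' : Perms, N ≤ σ.1 ∧ N ≤ σ'.1 ∧
        (∀ ρ : Perms, ρ.1 ≤ (τ (k - 1)).1 → |subDens ρ σ - subDens ρ σ'| < δ) ∧
        γ k - δ < subDens (τ k) σ - subDens (τ k) σ')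
    (α : ℕ → ℝ) (hpos : ∀ i, 0 < α i) (hsummable : Summable α)
    (hhalf : ∑' i, α i < 1 / 2)
    (htail : ∀ k, 2 ≤ k → ∑' i : {i : ℕ // k < i}, α i.1 < α k * γ k / 4) :
    ¬ FinitelyForcible (fun σ => ∑' i, α i * subDens (τ i) σ) :=
  not_finitelyForcible_of_oscillation_general τ horders γ hosc α hpos hsummable htail
end

section
/- Let τ be a non-trivial indecomposable permutation of order k, let m be a positive integer, let Φ_1,…,Φ_m be permutons and let x = (x_1,…,x_m) be positive reals with Σ_{i∈[m]} x_i ≤ 1. Then the direct sum Φ^x = ⊕_{i∈[m]}(x_i, Φ_i) satisfies t(τ,Φ^x) = Σ_{i=1}^m x_i^k · t(τ,Φ_i). -/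
open MeasureTheory

/-- A permuton: a Borel probability measure on `[0,1]²` (modeled as a measure on
`ℝ × ℝ` giving full mass to the unit square) with uniform marginals. -/
structure Permuton where
  μ : Measure (ℝ × ℝ)
  prob : IsProbabilityMeasure μ
  margX : ∀ a b : ℝ, 0 ≤ a → a ≤ b → b ≤ 1 →
    μ (Set.Icc a b ×ˢ Set.Icc (0 : ℝ) 1) = ENNReal.ofReal (b - a)
  margY : ∀ a b : ℝ, 0 ≤ a → a ≤ b → b ≤ 1 →
    μ (Set.Icc (0 : ℝ) 1 ×ˢ Set.Icc a b) = ENNReal.ofReal (b - a)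

/-- The density `t(τ,P)` of a pattern `τ` of order `k` in a permuton `P`:
`k!` times the `μ^{⊗k}`-measure of the set of `k`-tuples of points whose first
coordinates are increasing and whose second coordinates follow the pattern `τ`. -/
noncomputable def pdens {k : ℕ} (τ : Equiv.Perm (Fin k)) (P : Permuton) : ℝ :=
  haveI : IsProbabilityMeasure P.μ := P.prob
  (k.factorial : ℝ) *
    (Measure.pi (fun _ : Fin k => P.μ)
      {g : Fin k → ℝ × ℝ |
        (∀ i j : Fin k, i < j → (g i).1 < (g j).1) ∧
        (∀ i j : Fin k, (g i).2 < (g j).2 ↔ τ i < τ j)}).toReal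

/-- The partial sum `c_{i-1} = p_1 + … + p_{i-1}` (the left endpoint of the `i`-th
diagonal block). -/
noncomputable def psum {m : ℕ} (p : Fin m → ℝ) (i : Fin m) : ℝ :=
  ∑ j ∈ Finset.univ.filter (fun j => j < i), p j

/-- The direct sum `⊕_{i∈[m]} (p_i, Φ_i)` of the permutons `Φ_i` with weights
`p_i`: each `Φ_i` is rescaled into the diagonal square of side `p_i` starting at
`(c_{i-1}, c_{i-1})`, and the remaining mass is placed uniformly on the main
diagonal above `(Σ p_i, Σ p_i)`. -/
noncomputable def directSum (m : ℕ) (Φ : Fin m → Permuton) (p : Fin m → ℝ) :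
    Measure (ℝ × ℝ) :=
  (∑ i : Fin m, ENNReal.ofReal (p i) •
      ((Φ i).μ.map fun z : ℝ × ℝ => (psum p i + p i * z.1, psum p i + p i * z.2)))
  + (volume.restrict (Set.Icc (∑ i, p i) 1)).map (fun x : ℝ => (x, x))

/-! The direct sum is a sum of pieces living on the diagonal squares `I_j × I_j` of a partition
of `[0,1]` into consecutive intervals: the rescaled copies of `Φ_i` and a segment of the diagonal.
Each piece projects onto Lebesgue measure on `I_j`, which gives the uniform marginals. Expanding
the `k`-fold product of the sum, a `k`-tuple realising `τ` cannot meet two different squares: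
the points in the first square would form an initial segment lying below and to the left of the
others, a decomposition of `τ`. Nor can it lie on the diagonal segment, where it realises the
identity pattern, decomposable as `k ≥ 2`. Only tuples inside a single rescaled `Φ_i` remain, with
weight `x_i ^ k`, and the rescaling does not change relative positions. -/

open Set
open scoped ENNReal

attribute [instance] Permuton.prob

theorem Fin.mem_iff_lt_card_of_forall_lt {k : ℕ} {s : Finset (Fin k)}
    (h : ∀ a ∈ s, ∀ b ∉ s, a < b) (i : Fin k) : i ∈ s ↔ (i : ℕ) < s.card := by
  constructor
  · intro hi
    have : Finset.Iic i ⊆ s := fun w hw => by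
      by_contra hws
      exact absurd (Finset.mem_Iic.1 hw) (not_le.2 (h i hi w hws))
    simpa using Finset.card_le_card this
  · intro hi
    by_contra his
    have : s ⊆ Finset.Iio i := fun a ha => Finset.mem_Iio.2 (h a ha i his)
    have := Finset.card_le_card this
    rw [Fin.card_Iio] at this
    omega

theorem not_indecomposable_of_forall_lt {k : ℕ} (τ : Equiv.Perm (Fin k)) {j : ℕ} (hj : 1 ≤ j)
    (hjk : j < k) (hτ : ∀ i i' : Fin k, (i : ℕ) < j → j ≤ (i' : ℕ) → τ i < τ i') :
    ¬ Indecomposable τ := by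
  classical
  set s : Finset (Fin k) := {v | (τ.symm v : ℕ) < j}
  have hs : ∀ a ∈ s, ∀ b ∉ s, a < b := fun a ha b hb => by
    simpa using hτ (τ.symm a) (τ.symm b) (by simpa [s] using ha) (by simpa [s] using hb)
  have hcard : s.card = j := by
    rw [show s = Finset.map τ.toEmbedding {i | (i : ℕ) < j} by ext; simp [s]]
    simp [Fin.card_filter_val_lt, hjk.le]
  refine fun hind => hind ⟨j, hj, hjk, fun i => ?_⟩
  simpa [s, hcard] using (Fin.mem_iff_lt_card_of_forall_lt hs (τ i)).symm

section psum

variable {m : ℕ}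

theorem psum_zero (x : Fin (m + 1) → ℝ) : psum x 0 = 0 := by
  simp [psum]

theorem psum_succ (x : Fin (m + 1) → ℝ) (i : Fin m) :
    psum x i.succ = x 0 + psum (fun j => x j.succ) i := by
  simp [psum, Finset.sum_filter, Fin.sum_univ_succ, Fin.succ_pos]

theorem sum_sub_psum (f : ℝ → ℝ) (x : Fin m → ℝ) :
    ∑ i, (f (psum x i + x i) - f (psum x i)) = f (∑ i, x i) - f 0 := by
  induction m generalizing f with
  | zero => simp
  | succ m ih =>
    simp_rw [Fin.sum_univ_succ, psum_zero, psum_succ, add_assoc]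
    rw [ih (fun t => f (x 0 + t)) (fun j => x j.succ)]
    simp

theorem psum_add_le_psum {x : Fin m → ℝ} (hx : ∀ i, 0 ≤ x i) {i i' : Fin m} (h : i < i') :
    psum x i + x i ≤ psum x i' := by
  classical
  rw [psum, psum, add_comm, ← Finset.sum_insert (by simp)]
  refine Finset.sum_le_sum_of_subset_of_nonneg ?_ fun j _ _ => hx j
  intro j hj
  simp only [Finset.mem_insert, Finset.mem_filter, Finset.mem_univ, true_and] at hj ⊢
  rcases hj with rfl | hj
  exacts [h, hj.trans h]

theorem psum_add_le_sum {x : Fin m → ℝ} (hx : ∀ i, 0 ≤ x i) (i : Fin m) :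
    psum x i + x i ≤ ∑ j, x j := by
  classical
  rw [psum, add_comm, ← Finset.sum_insert (by simp)]
  exact Finset.sum_le_sum_of_subset_of_nonneg (Finset.subset_univ _) fun j _ _ => hx j

end psum

theorem Set.Iic_inter_Icc {α : Type*} [LinearOrder α] (t a b : α) :
    Iic t ∩ Icc a b = Icc a (min t b) := by
  ext
  simp only [mem_inter_iff, mem_Iic, mem_Icc, le_inf_iff]
  tauto

theorem Real.volume_Iic_inter_Icc (t a b : ℝ) :
    volume (Iic t ∩ Icc a b) = ENNReal.ofReal (min t b - min t a) := by
  rw [Iic_inter_Icc, Real.volume_Icc]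
  rcases le_total a t with h | h
  · rw [min_eq_right h]
  · rw [ENNReal.ofReal_of_nonpos (by linarith [min_le_left t b]),
      ENNReal.ofReal_of_nonpos (by simp [h])]

theorem smul_map_restrict_Icc_affine (c : ℝ) {s : ℝ} (hs : 0 < s) :
    ENNReal.ofReal s • (volume.restrict (Icc 0 1)).map (fun t => c + s * t) =
      volume.restrict (Icc c (c + s)) := by
  ext u hu
  have hpre : (fun t => c + s * t) ⁻¹' u ∩ Icc 0 1 =
      (s * ·) ⁻¹' ((c + ·) ⁻¹' (u ∩ Icc c (c + s))) := by
    ext t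
    simp only [mem_inter_iff, mem_preimage, mem_Icc, le_add_iff_nonneg_right,
      add_le_add_iff_left]
    rw [mul_nonneg_iff_of_pos_left hs, mul_le_iff_le_one_right hs]
  rw [Measure.smul_apply, Measure.map_apply (by fun_prop) hu,
    Measure.restrict_apply (hu.preimage (by fun_prop)), Measure.restrict_apply hu, hpre,
    Real.volume_preimage_mul_left hs.ne', measure_preimage_add, smul_eq_mul, ← mul_assoc,
    ← ENNReal.ofReal_mul hs.le, abs_of_pos (inv_pos.2 hs), mul_inv_cancel₀ hs.ne',
    ENNReal.ofReal_one, one_mul]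

theorem map_fst_eq_of_measure_Icc_prod (μ : Measure (ℝ × ℝ)) [IsProbabilityMeasure μ]
    (h : ∀ a b : ℝ, 0 ≤ a → a ≤ b → b ≤ 1 → μ (Icc a b ×ˢ Icc 0 1) = ENNReal.ofReal (b - a)) :
    μ.map Prod.fst = volume.restrict (Icc 0 1) := by
  have hsq : μ (Icc (0 : ℝ) 1 ×ˢ Icc 0 1)ᶜ = 0 := by
    rw [prob_compl_eq_zero_iff (measurableSet_Icc.prod measurableSet_Icc),
      h 0 1 le_rfl zero_le_one le_rfl]
    simp
  refine Measure.ext_of_Iic _ _ fun t => ?_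
  rw [Measure.map_apply measurable_fst measurableSet_Iic, Measure.restrict_apply measurableSet_Iic,
    ← measure_inter_conull hsq,
    show Prod.fst ⁻¹' Iic t ∩ Icc 0 1 ×ˢ Icc 0 1 = Icc 0 (min t 1) ×ˢ Icc (0 : ℝ) 1 by
      ext; simp only [mem_inter_iff, mem_preimage, mem_prod, mem_Icc, mem_Iic, le_min_iff]; tauto,
    Iic_inter_Icc]
  rcases le_or_gt 0 (min t 1) with ht | ht
  · rw [h 0 _ le_rfl ht (min_le_right _ _), Real.volume_Icc]
  · simp [Icc_eq_empty (not_le.2 ht)]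

theorem map_swap_apply_prod {α β : Type*} [MeasurableSpace α] [MeasurableSpace β]
    (μ : Measure (α × β)) {s : Set β} {t : Set α} (hs : MeasurableSet s) (ht : MeasurableSet t) :
    μ.map Prod.swap (s ×ˢ t) = μ (t ×ˢ s) := by
  rw [Measure.map_apply measurable_swap (hs.prod ht), preimage_swap_prod]

theorem measure_Icc_prod_of_map_eq (μ : Measure (ℝ × ℝ))
    (hX : μ.map Prod.fst = volume.restrict (Icc 0 1))
    (hY : μ.map Prod.snd = volume.restrict (Icc 0 1)) {a b : ℝ} (ha : 0 ≤ a) (hb : b ≤ 1) :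
    μ (Icc a b ×ˢ Icc 0 1) = ENNReal.ofReal (b - a) := by
  have hconull : μ (Prod.snd ⁻¹' Icc 0 1)ᶜ = 0 := by
    rw [← preimage_compl, ← Measure.map_apply measurable_snd measurableSet_Icc.compl, hY,
      Measure.restrict_apply' measurableSet_Icc, compl_inter_self, measure_empty]
  rw [prod_eq, measure_inter_conull hconull, ← Measure.map_apply measurable_fst measurableSet_Icc,
    hX, Measure.restrict_apply measurableSet_Icc,
    inter_eq_left.2 (Icc_subset_Icc ha hb), Real.volume_Icc]

theorem Measure.pi_const_sum {ι J α : Type*} [Fintype ι] [DecidableEq ι] [Fintype J]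
    [MeasurableSpace α] (ν : J → Measure α) [∀ j, IsFiniteMeasure (ν j)] :
    Measure.pi (fun _ : ι => ∑ j, ν j) = ∑ f : ι → J, Measure.pi fun i => ν (f i) := by
  refine Measure.pi_eq fun s _ => ?_
  simp_rw [Measure.finsetSum_apply, Measure.pi_pi]
  exact (Fintype.prod_sum fun i j => ν j (s i)).symm

theorem Measure.pi_const_smul {ι α : Type*} [Fintype ι] [MeasurableSpace α] {c : ℝ≥0∞}
    (hc : c ≠ ∞) (ν : Measure α) [IsFiniteMeasure ν] :
    Measure.pi (fun _ : ι => c • ν) = c ^ Fintype.card ι • Measure.pi fun _ : ι => ν := by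
  have : IsFiniteMeasure (c • ν) := ⟨ENNReal.mul_lt_top hc.lt_top (measure_lt_top ν _)⟩
  refine Measure.pi_eq fun s _ => ?_
  simp [Measure.pi_pi, Finset.prod_mul_distrib]

namespace Permuton

theorem map_fst (P : Permuton) : P.μ.map Prod.fst = volume.restrict (Icc 0 1) :=
  map_fst_eq_of_measure_Icc_prod P.μ P.margX

theorem map_snd (P : Permuton) : P.μ.map Prod.snd = volume.restrict (Icc 0 1) := by
  rw [show (Prod.snd : ℝ × ℝ → ℝ) = Prod.fst ∘ Prod.swap from rfl,
    ← Measure.map_map measurable_fst measurable_swap]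
  have := Measure.isProbabilityMeasure_map (μ := P.μ) measurable_swap.aemeasurable
  refine map_fst_eq_of_measure_Icc_prod _ fun a b ha hab hb => ?_
  rw [map_swap_apply_prod _ measurableSet_Icc measurableSet_Icc]
  exact P.margY a b ha hab hb

theorem ae_mem_square (P : Permuton) : ∀ᵐ z ∂P.μ, z ∈ Icc (0 : ℝ) 1 ×ˢ Icc (0 : ℝ) 1 := by
  have h1 : ∀ᵐ z ∂P.μ, z.1 ∈ Icc (0 : ℝ) 1 := ae_of_ae_map measurable_fst.aemeasurable
    (P.map_fst ▸ ae_restrict_mem measurableSet_Icc)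
  have h2 : ∀ᵐ z ∂P.μ, z.2 ∈ Icc (0 : ℝ) 1 := ae_of_ae_map measurable_snd.aemeasurable
    (P.map_snd ▸ ae_restrict_mem measurableSet_Icc)
  filter_upwards [h1, h2] with z using And.intro

noncomputable def ofMarginals (μ : Measure (ℝ × ℝ))
    (hX : μ.map Prod.fst = volume.restrict (Icc 0 1))
    (hY : μ.map Prod.snd = volume.restrict (Icc 0 1)) : Permuton where
  μ := μ
  prob := ⟨by
    rw [← preimage_univ (f := Prod.fst), ← Measure.map_apply measurable_fst .univ, hX]
    simp⟩
  margX _ _ ha _ hb := measure_Icc_prod_of_map_eq μ hX hY ha hb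
  margY a b ha _ hb := by
    rw [← map_swap_apply_prod _ measurableSet_Icc measurableSet_Icc]
    refine measure_Icc_prod_of_map_eq _ ?_ ?_ ha hb
    · rw [Measure.map_map measurable_fst measurable_swap]; exact hY
    · rw [Measure.map_map measurable_snd measurable_swap]; exact hX

end Permuton

section blocks

variable {m : ℕ}

noncomputable def blockLo (x : Fin m → ℝ) : Option (Fin m) → ℝ
  | none => ∑ i, x i
  | some i => psum x i

noncomputable def blockHi (x : Fin m → ℝ) : Option (Fin m) → ℝ
  | none => 1
  | some i => psum x i + x i

noncomputable def block (Φ : Fin m → Permuton) (x : Fin m → ℝ) :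
    Option (Fin m) → Measure (ℝ × ℝ)
  | none => (volume.restrict (Icc (∑ i, x i) 1)).map fun t => (t, t)
  | some i => ENNReal.ofReal (x i) •
      (Φ i).μ.map fun z => (psum x i + x i * z.1, psum x i + x i * z.2)

theorem directSum_eq_sum_block (Φ : Fin m → Permuton) (x : Fin m → ℝ) :
    directSum m Φ x = ∑ j, block Φ x j := by
  rw [Fintype.sum_option, add_comm]
  rfl

theorem map_block {π : ℝ × ℝ → ℝ} (hπ : Measurable π)
    (hπ_affine : ∀ (c s : ℝ) (z : ℝ × ℝ), π (c + s * z.1, c + s * z.2) = c + s * π z)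
    {Φ : Fin m → Permuton} (hΦ : ∀ i, (Φ i).μ.map π = volume.restrict (Icc 0 1))
    {x : Fin m → ℝ} (hx : ∀ i, 0 < x i) (j : Option (Fin m)) :
    (block Φ x j).map π = volume.restrict (Icc (blockLo x j) (blockHi x j)) := by
  cases j with
  | none =>
    have hdiag : π ∘ (fun t : ℝ => (t, t)) = id := funext fun t => by
      simpa using hπ_affine t 0 0
    rw [block, Measure.map_map hπ (by fun_prop), hdiag, Measure.map_id]
    rfl
  | some i =>
    have hcomm : π ∘ (fun z : ℝ × ℝ => (psum x i + x i * z.1, psum x i + x i * z.2)) =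
        (fun t => psum x i + x i * t) ∘ π := funext (hπ_affine _ _)
    rw [block, Measure.map_smul, Measure.map_map hπ (by fun_prop), hcomm,
      ← Measure.map_map (by fun_prop) hπ, hΦ, smul_map_restrict_Icc_affine _ (hx i)]
    rfl

theorem sum_restrict_Icc_block {x : Fin m → ℝ} (hx : ∀ i, 0 ≤ x i) (hsum : ∑ i, x i ≤ 1) :
    ∑ j, volume.restrict (Icc (blockLo x j) (blockHi x j)) = volume.restrict (Icc (0 : ℝ) 1) := by
  refine (Measure.ext_of_Iic _ _ fun t => ?_).symm
  have hmono : Monotone (min t) := fun _ _ h => min_le_min_left t h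
  simp_rw [Measure.finsetSum_apply, Measure.restrict_apply measurableSet_Iic,
    Real.volume_Iic_inter_Icc, Fintype.sum_option, blockLo, blockHi]
  rw [← ENNReal.ofReal_sum_of_nonneg fun i _ => sub_nonneg.2 (hmono (by linarith [hx i])),
    ← ENNReal.ofReal_add (sub_nonneg.2 (hmono hsum)), sum_sub_psum, sub_add_sub_cancel]
  rw [sum_sub_psum]
  exact sub_nonneg.2 (hmono (Finset.sum_nonneg fun i _ => hx i))

theorem map_directSum {π : ℝ × ℝ → ℝ} (hπ : Measurable π)
    (hπ_affine : ∀ (c s : ℝ) (z : ℝ × ℝ), π (c + s * z.1, c + s * z.2) = c + s * π z)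
    {Φ : Fin m → Permuton} (hΦ : ∀ i, (Φ i).μ.map π = volume.restrict (Icc 0 1))
    {x : Fin m → ℝ} (hx : ∀ i, 0 < x i) (hsum : ∑ i, x i ≤ 1) :
    (directSum m Φ x).map π = volume.restrict (Icc 0 1) := by
  ext s hs
  simp_rw [Measure.map_apply hπ hs, directSum_eq_sum_block, Measure.finsetSum_apply,
    ← Measure.map_apply hπ hs, map_block hπ hπ_affine hΦ hx]
  rw [← Measure.finsetSum_apply, sum_restrict_Icc_block (fun i => (hx i).le) hsum]

end blocks

section patterns

variable {k : ℕ}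

def patternSet (τ : Equiv.Perm (Fin k)) : Set (Fin k → ℝ × ℝ) :=
  {g | (∀ i j : Fin k, i < j → (g i).1 < (g j).1) ∧ (∀ i j : Fin k, (g i).2 < (g j).2 ↔ τ i < τ j)}

theorem pdens_eq_pi_patternSet (τ : Equiv.Perm (Fin k)) (P : Permuton) :
    pdens τ P = k.factorial * (Measure.pi (fun _ : Fin k => P.μ) (patternSet τ)).toReal :=
  rfl

theorem measurableSet_patternSet (τ : Equiv.Perm (Fin k)) : MeasurableSet (patternSet τ) := by
  unfold patternSet
  measurability

theorem preimage_patternSet (τ : Equiv.Perm (Fin k)) {u v : ℝ → ℝ} (hu : StrictMono u)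
    (hv : StrictMono v) :
    (fun g i => (u (g i).1, v (g i).2)) ⁻¹' patternSet τ = patternSet τ := by
  ext g
  simp [patternSet, hu.lt_iff_lt, hv.lt_iff_lt]

theorem snd_injective_of_mem_patternSet {τ : Equiv.Perm (Fin k)} {g : Fin k → ℝ × ℝ}
    (hg : g ∈ patternSet τ) : Function.Injective fun i => (g i).2 := by
  intro i j hij
  have hi := hg.2 i j
  have hj := hg.2 j i
  simp only [hij, lt_irrefl, false_iff, not_lt] at hi hj
  exact τ.injective (le_antisymm hj hi)

end patterns

section support

variable {m : ℕ}

def blockSupport (x : Fin m → ℝ) (j : Option (Fin m)) : Set (ℝ × ℝ) :=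
  {p | p.1 ∈ Icc (blockLo x j) (blockHi x j) ∧ p.2 ∈ Icc (blockLo x j) (blockHi x j) ∧
    (j = none → p.2 = p.1)}

theorem measurableSet_blockSupport (x : Fin m → ℝ) (j : Option (Fin m)) :
    MeasurableSet (blockSupport x j) := by
  unfold blockSupport
  measurability

theorem ae_mem_blockSupport (Φ : Fin m → Permuton) {x : Fin m → ℝ} (hx : ∀ i, 0 ≤ x i)
    (j : Option (Fin m)) : ∀ᵐ p ∂block Φ x j, p ∈ blockSupport x j := by
  cases j with
  | none =>
    refine (ae_map_iff (by fun_prop) (measurableSet_blockSupport x none)).2 ?_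
    exact ae_restrict_of_forall_mem measurableSet_Icc fun t ht => ⟨ht, ht, fun _ => rfl⟩
  | some i =>
    refine Measure.ae_smul_measure ((ae_map_iff (by fun_prop)
      (measurableSet_blockSupport x (some i))).2 ?_) _
    filter_upwards [(Φ i).ae_mem_square] with z ⟨⟨hz₁, hz₁'⟩, hz₂, hz₂'⟩
    have hxi := hx i
    refine ⟨⟨?_, ?_⟩, ⟨?_, ?_⟩, nofun⟩ <;> simp only [blockLo, blockHi] <;> nlinarith

theorem blockHi_le_blockLo_or {x : Fin m → ℝ} (hx : ∀ i, 0 ≤ x i) {j j' : Option (Fin m)}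
    (h : j ≠ j') : blockHi x j ≤ blockLo x j' ∨ blockHi x j' ≤ blockLo x j := by
  cases j with
  | none =>
    cases j' with
    | none => exact absurd rfl h
    | some i => exact Or.inr (psum_add_le_sum hx i)
  | some i =>
    cases j' with
    | none => exact Or.inl (psum_add_le_sum hx i)
    | some i' =>
      rcases lt_or_gt_of_ne fun hi => h (congrArg some hi) with hlt | hlt
      · exact Or.inl (psum_add_le_psum hx hlt)
      · exact Or.inr (psum_add_le_psum hx hlt)

theorem blockHi_le_blockLo_of_fst_lt {x : Fin m → ℝ} (hx : ∀ i, 0 ≤ x i)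
    {j j' : Option (Fin m)} (h : j ≠ j') {p q : ℝ × ℝ} (hp : p ∈ blockSupport x j)
    (hq : q ∈ blockSupport x j') (hpq : p.1 < q.1) : blockHi x j ≤ blockLo x j' :=
  (blockHi_le_blockLo_or hx h).resolve_right fun h' => by linarith [hp.1.1, hq.1.2]

end support

section density

variable {k m : ℕ}

theorem exists_eq_some_of_mem_patternSet (hk : 2 ≤ k) {τ : Equiv.Perm (Fin k)}
    (hτ : Indecomposable τ) {x : Fin m → ℝ} (hx : ∀ i, 0 ≤ x i) {f : Fin k → Option (Fin m)}
    {g : Fin k → ℝ × ℝ} (hg : g ∈ patternSet τ) (hgf : ∀ i, g i ∈ blockSupport x (f i)) :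
    ∃ i, f = fun _ => some i := by
  classical
  have hsep : ∀ {i i'}, f i ≠ f i' → (g i).1 < (g i').1 → blockHi x (f i) ≤ blockLo x (f i') :=
    fun h => blockHi_le_blockLo_of_fst_lt hx h (hgf _) (hgf _)
  let i₀ : Fin k := ⟨0, by omega⟩
  by_cases hconst : ∀ i, f i = f i₀
  · cases hf₀ : f i₀ with
    | some i => exact ⟨i, funext fun i' => (hconst i').trans hf₀⟩
    | none =>
      have hdiag : ∀ i, (g i).2 = (g i).1 := fun i => (hgf i).2.2 ((hconst i).trans hf₀)
      refine absurd hτ (not_indecomposable_of_forall_lt τ le_rfl (by omega) fun i i' hi hi' => ?_)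
      exact (hg.2 i i').1 (by rw [hdiag, hdiag]; exact hg.1 i i' (Fin.lt_def.2 (by omega)))
  · obtain ⟨i₁, hi₁⟩ := not_forall.1 hconst
    -- The indices sharing the block of `g i₀` form an initial segment, which `τ` preserves.
    set A : Finset (Fin k) := {i | f i = f i₀}
    have hA : ∀ a ∈ A, ∀ b ∉ A, a < b := by
      intro a ha b hb
      simp only [A, Finset.mem_filter, Finset.mem_univ, true_and] at ha hb
      by_contra hba
      have hi₀b : i₀ < b := Fin.lt_def.2 (Nat.pos_of_ne_zero fun h0 =>
        hb (congrArg f (Fin.ext h0)))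
      have hba' : b < a := lt_of_le_of_ne (not_lt.1 hba) fun h => hb (h ▸ ha)
      have := hsep (Ne.symm hb) (hg.1 _ _ hi₀b)
      linarith [(hgf a).1.2, (hgf b).1.1, hg.1 _ _ hba', congrArg (blockHi x) ha]
    have hmem := Fin.mem_iff_lt_card_of_forall_lt hA
    have hi₀A : i₀ ∈ A := by simp [A]
    have hi₁A : i₁ ∉ A := by simpa [A] using hi₁
    refine absurd hτ (not_indecomposable_of_forall_lt τ ((hmem i₀).1 hi₀A)
      (by have := (hmem i₁).not.1 hi₁A; omega) fun i i' hi hi' => ?_)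
    have hiA := (hmem i).2 hi
    have hi'A : i' ∉ A := fun h => by have := (hmem i').1 h; omega
    have hne : f i ≠ f i' := by
      simp only [A, Finset.mem_filter, Finset.mem_univ, true_and] at hiA hi'A
      rwa [hiA, ne_comm]
    have hlt := hsep hne (hg.1 _ _ (hA i hiA i' hi'A))
    have hle : (g i).2 ≤ (g i').2 := by linarith [(hgf i).2.1.2, (hgf i').2.1.1]
    exact (hg.2 i i').1 (hle.lt_of_ne fun h => hne (by
      rw [snd_injective_of_mem_patternSet hg h]))

instance (Φ : Fin m → Permuton) (x : Fin m → ℝ) (j : Option (Fin m)) :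
    IsFiniteMeasure (block Φ x j) := by
  cases j with
  | none => rw [block]; infer_instance
  | some i => exact ⟨ENNReal.mul_lt_top ENNReal.ofReal_lt_top (measure_lt_top _ _)⟩

theorem pi_block_patternSet_eq_zero (hk : 2 ≤ k) {τ : Equiv.Perm (Fin k)}
    (hτ : Indecomposable τ) (Φ : Fin m → Permuton) {x : Fin m → ℝ} (hx : ∀ i, 0 ≤ x i)
    {f : Fin k → Option (Fin m)} (hf : ∀ i, f ≠ fun _ => some i) :
    Measure.pi (fun i => block Φ x (f i)) (patternSet τ) = 0 := by
  have hae : ∀ᵐ g ∂Measure.pi (fun i => block Φ x (f i)),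
      g ∈ univ.pi fun i => blockSupport x (f i) :=
    Measure.ae_pi_le_pi (Filter.pi_mem_pi finite_univ fun i _ => ae_mem_blockSupport Φ hx (f i))
  refine measure_eq_zero_iff_ae_notMem.2 (hae.mono fun g hgf hg => ?_)
  obtain ⟨i, hi⟩ := exists_eq_some_of_mem_patternSet hk hτ hx hg (mem_univ_pi.1 hgf)
  exact hf i hi

theorem pi_block_some_patternSet (τ : Equiv.Perm (Fin k)) (Φ : Fin m → Permuton)
    {x : Fin m → ℝ} (hx : ∀ i, 0 < x i) (i : Fin m) :
    Measure.pi (fun _ => block Φ x (some i)) (patternSet τ) =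
      ENNReal.ofReal (x i) ^ k * Measure.pi (fun _ => (Φ i).μ) (patternSet τ) := by
  have hη : StrictMono fun t => psum x i + x i * t :=
    (strictMono_mul_left_of_pos (hx i)).const_add _
  rw [block, Measure.pi_const_smul ENNReal.ofReal_ne_top, Fintype.card_fin, Measure.smul_apply,
    smul_eq_mul, ← (measurePreserving_pi _ _ fun _ =>
      (Measurable.measurePreserving (by fun_prop) _)).measure_preimage
      (measurableSet_patternSet τ).nullMeasurableSet, preimage_patternSet τ hη hη]

theorem pi_directSum_patternSet (hk : 2 ≤ k) {τ : Equiv.Perm (Fin k)} (hτ : Indecomposable τ)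
    (Φ : Fin m → Permuton) {x : Fin m → ℝ} (hx : ∀ i, 0 < x i) :
    Measure.pi (fun _ : Fin k => directSum m Φ x) (patternSet τ) =
      ∑ i, ENNReal.ofReal (x i) ^ k * Measure.pi (fun _ => (Φ i).μ) (patternSet τ) := by
  classical
  have hconst : Function.Injective fun (i : Fin m) (_ : Fin k) => some i :=
    fun i i' h => Option.some_injective _ (congrFun h ⟨0, by omega⟩)
  simp_rw [directSum_eq_sum_block, Measure.pi_const_sum, Measure.finsetSum_apply]
  rw [← Finset.sum_subset (Finset.subset_univ (Finset.univ.map ⟨_, hconst⟩)), Finset.sum_map]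
  · exact Finset.sum_congr rfl fun i _ => pi_block_some_patternSet τ Φ hx i
  · refine fun f _ hf => pi_block_patternSet_eq_zero hk hτ Φ (fun i => (hx i).le) fun i hi => ?_
    exact hf (Finset.mem_map.2 ⟨i, Finset.mem_univ _, hi.symm⟩)

end density

theorem pdens_directSum_general {k : ℕ} (hk : 2 ≤ k) (τ : Equiv.Perm (Fin k))
    (hτ : Indecomposable τ) (m : ℕ) (Φ : Fin m → Permuton)
    (x : Fin m → ℝ) (hx : ∀ i, 0 < x i) (hsum : ∑ i, x i ≤ 1) :
    ∃ P : Permuton, P.μ = directSum m Φ x ∧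
      pdens τ P = ∑ i : Fin m, x i ^ k * pdens τ (Φ i) := by
  obtain ⟨P, hP⟩ : ∃ P : Permuton, P.μ = directSum m Φ x := ⟨Permuton.ofMarginals _
    (map_directSum measurable_fst (fun _ _ _ => rfl) (fun i => (Φ i).map_fst) hx hsum)
    (map_directSum measurable_snd (fun _ _ _ => rfl) (fun i => (Φ i).map_snd) hx hsum), rfl⟩
  refine ⟨P, hP, ?_⟩
  simp_rw [pdens_eq_pi_patternSet, hP]
  rw [pi_directSum_patternSet hk hτ Φ hx, ENNReal.toReal_sum (by finiteness), Finset.mul_sum]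
  refine Finset.sum_congr rfl fun i _ => ?_
  rw [ENNReal.toReal_mul, ENNReal.toReal_pow, ENNReal.toReal_ofReal (hx i).le]
  ring

/-- **Observation (direct sums).** For a non-trivial indecomposable permutation
`τ` of order `k`, permutons `Φ_1,…,Φ_m` and positive weights `x_i` with
`Σ x_i ≤ 1`, the direct sum `Φ^x = ⊕_i (x_i, Φ_i)` is a permuton and satisfies
`t(τ,Φ^x) = Σ_i x_i^k · t(τ,Φ_i)`. -/
theorem pdens_directSum {k : ℕ} (hk : 2 ≤ k) (τ : Equiv.Perm (Fin k))
    (hτ : Indecomposable τ) (m : ℕ) (hm : 0 < m) (Φ : Fin m → Permuton)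
    (x : Fin m → ℝ) (hx : ∀ i, 0 < x i) (hsum : ∑ i, x i ≤ 1) :
    ∃ P : Permuton, P.μ = directSum m Φ x ∧
      pdens τ P = ∑ i : Fin m, x i ^ k * pdens τ (Φ i) :=
  pdens_directSum_general hk τ hτ m Φ x hx hsum
end
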